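/- arXiv:2110.01564 — 7 statements merged into one kernel-verified Lean document; each statement's English description precedes it below -/
import Mathlib

section
/- Let M, k ∈ ℕ, let U : Fin M → Fin M → ℂ be a matrix, and let f, g : Fin k → Fin M be functions. For i, j ∈ Fin M set n(i) = |{a : Fin k | f(a) = i}| and m(j) = |{b : Fin k | g(b) = j}|. Then the permanent of the k×k matrix V defined by V(a,b) = U(f(a), g(b)) satisfies Per(V) = Σ_τ [ (∏_i n(i)!) · (∏_j m(j)!) / (∏_{i,j} τ(i,j)!) ] · ∏_{i,j} U(i,j)^{τ(i,j)}, where the sum ranges over all functions τ : Fin M → Fin M → ℕ with row sums Σ_j τ(i,j) = n(i) for every i and column sums Σ_i τ(i,j) = m(j) for every j. -/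
/-!
Sort the permutations σ by the contingency table τ_σ(i, j) = #{a | f a = i, g (σ a) = j}; the
term of σ in the permanent is ∏ U i j ^ τ_σ(i, j). The number of σ with τ_σ = τ follows from two
fibre counts over the set C_τ of labellings v with #{a | f a = i, v a = j} = τ(i, j):
σ ↦ g ∘ σ maps {σ | τ_σ = τ} to C_τ with fibres of size ∏ m(j)!, and, for a fixed v₀ ∈ C_τ,
σ ↦ v₀ ∘ σ maps the stabiliser of f (of size ∏ n(i)!) to C_τ with fibres of size ∏ τ(i, j)!
(cosets of the stabiliser of a ↦ (f a, v₀ a)).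
-/

open Finset Equiv Nat

variable {α β γ : Type*} [Fintype α] [DecidableEq β] [DecidableEq γ]

def contingencyTable (u : α → β) (v : α → γ) (i : β) (j : γ) : ℕ :=
  #{a | u a = i ∧ v a = j}

theorem contingencyTable_comp_equiv {α' : Type*} [Fintype α'] (e : α' ≃ α) (u : α → β)
    (v : α → γ) : contingencyTable (u ∘ e) (v ∘ e) = contingencyTable u v := by
  ext i j
  exact card_equiv e (by simp)

theorem sum_contingencyTable_left [Fintype β] (u : α → β) (v : α → γ) (j : γ) :
    ∑ i, contingencyTable u v i j = #{a | v a = j} := by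
  rw [card_eq_sum_card_fiberwise (f := u) (t := univ) (fun a _ => mem_univ _)]
  refine sum_congr rfl fun i _ => congrArg card (ext fun a => ?_)
  simp [and_comm]

theorem sum_contingencyTable_right [Fintype γ] (u : α → β) (v : α → γ) (i : β) :
    ∑ j, contingencyTable u v i j = #{a | u a = i} := by
  rw [card_eq_sum_card_fiberwise (f := v) (t := univ) (fun a _ => mem_univ _)]
  refine sum_congr rfl fun j _ => congrArg card (ext fun a => ?_)
  simp

theorem card_prodMk_eq_contingencyTable (u : α → β) (v : α → γ) (x : β × γ) :
    #{a | (u a, v a) = x} = contingencyTable u v x.1 x.2 := by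
  simp [contingencyTable, Prod.ext_iff]

theorem prod_eq_prod_pow_contingencyTable [Fintype β] [Fintype γ] {R : Type*} [CommMonoid R]
    (U : β → γ → R) (u : α → β) (v : α → γ) :
    ∏ a, U (u a) (v a) = ∏ i, ∏ j, U i j ^ contingencyTable u v i j := by
  rw [← prod_fiberwise' univ (fun a => (u a, v a)) (fun x => U x.1 x.2), Fintype.prod_prod_type]
  simp_rw [prod_const, card_prodMk_eq_contingencyTable]

theorem exists_contingencyTable_eq [Fintype β] [Fintype γ] (u : α → β) (τ : β → γ → ℕ)
    (hrow : ∀ i, ∑ j, τ i j = #{a | u a = i}) :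
    ∃ v : α → γ, contingencyTable u v = τ := by
  -- `τ` is realised on the model `Σ i, Σ j, Fin (τ i j)`, which is then transported to `α`
  -- along a bijection preserving the fibres of the first coordinate.
  have hrowX : ∀ i, #{x : Σ i, Σ j, Fin (τ i j) | x.1 = i} = ∑ j, τ i j := by
    intro i
    have : ({x | x.1 = i} : Finset (Σ i, Σ j, Fin (τ i j))) =
        ({i} : Finset β).sigma fun _ => univ := by
      ext ⟨i', j', t⟩; simp
    simp [this]
  have hcellX : ∀ i j, #{x : Σ i, Σ j, Fin (τ i j) | x.1 = i ∧ x.2.1 = j} = τ i j := by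
    intro i j
    have : ({x | x.1 = i ∧ x.2.1 = j} : Finset (Σ i, Σ j, Fin (τ i j))) =
        ({i} : Finset β).sigma fun _ => ({j} : Finset γ).sigma fun _ => univ := by
      ext ⟨i', j', t⟩; simp
    simp [this]
  have hfiber : ∀ i, Fintype.card {a // u a = i} =
      Fintype.card {x : Σ i, Σ j, Fin (τ i j) // x.1 = i} := by
    simp [Fintype.card_subtype, hrowX, hrow]
  let e := ofFiberEquiv fun i => Fintype.equivOfCardEq (hfiber i)
  refine ⟨fun a => (e a).2.1, ?_⟩
  have hu : (fun x => x.1) ∘ e = u := funext (ofFiberEquiv_map _)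
  change contingencyTable u ((fun x => x.2.1) ∘ e) = τ
  rw [← hu, contingencyTable_comp_equiv e]
  ext i j
  exact hcellX i j

variable [DecidableEq α] [Fintype β] [Fintype γ]

theorem card_perm_comp_eq (p q : α → β) (h : ∀ b, #{a | p a = b} = #{a | q a = b}) :
    #{σ : Perm α | p ∘ σ = q} = ∏ b, (#{a | p a = b})! := by
  have hcard : ∀ b, Fintype.card {a // q a = b} = Fintype.card {a // p a = b} := by
    simp [Fintype.card_subtype, h]
  let σ₀ := ofFiberEquiv fun b => Fintype.equivOfCardEq (hcard b)
  have hσ₀ : p ∘ σ₀ = q := funext (ofFiberEquiv_map _)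
  calc #{σ : Perm α | p ∘ σ = q} = #{π : Perm α | q ∘ π = q} := by
        refine card_equiv (Equiv.mulLeft σ₀⁻¹) fun σ => ?_
        simp [← hσ₀, funext_iff]
    _ = ∏ b, (#{a | p a = b})! := by
        simpa [Fintype.card_subtype, h] using DomMulAct.stabilizer_card q

theorem card_perm_contingencyTable_eq (f : α → β) (g : α → γ) (τ : β → γ → ℕ)
    (hcol : ∀ j, ∑ i, τ i j = #{b | g b = j}) :
    #{σ : Perm α | contingencyTable f (g ∘ σ) = τ} =
      #{v : α → γ | contingencyTable f v = τ} * ∏ j, (#{b | g b = j})! := by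
  rw [card_eq_sum_card_fiberwise (f := fun σ : Perm α => g ∘ σ)
    (t := {v | contingencyTable f v = τ}) (by intro σ hσ; simpa using hσ)]
  refine sum_const_nat fun v hv => ?_
  simp only [mem_filter, mem_univ, true_and] at hv
  have hfiber : ∀ j, #{a | g a = j} = #{a | v a = j} := by
    intro j
    rw [← hcol, ← sum_contingencyTable_left f v, hv]
  rw [← card_perm_comp_eq g v hfiber]
  congr 1
  ext σ
  simp only [mem_filter, mem_univ, true_and, and_iff_right_iff_imp]
  rintro rfl
  exact hv

theorem prod_factorial_card_fiber_eq (f : α → β) (τ : β → γ → ℕ)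
    (hrow : ∀ i, ∑ j, τ i j = #{a | f a = i}) :
    ∏ i, (#{a | f a = i})! = #{v : α → γ | contingencyTable f v = τ} * ∏ i, ∏ j, (τ i j)! := by
  obtain ⟨v₀, hv₀⟩ := exists_contingencyTable_eq f τ hrow
  have hmaps : ∀ σ ∈ ({σ | f ∘ σ = f} : Finset (Perm α)),
      v₀ ∘ σ ∈ ({v | contingencyTable f v = τ} : Finset (α → γ)) := by
    intro σ hσ
    simp only [mem_filter, mem_univ, true_and] at hσ ⊢
    conv_lhs => rw [← hσ]
    rw [contingencyTable_comp_equiv, hv₀]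
  rw [← card_perm_comp_eq f f fun _ => rfl, card_eq_sum_card_fiberwise hmaps]
  refine sum_const_nat fun v hv => ?_
  simp only [mem_filter, mem_univ, true_and] at hv
  have hfiber : ∀ x, #{a | (f a, v₀ a) = x} = #{a | (f a, v a) = x} := by
    intro x
    rw [card_prodMk_eq_contingencyTable, card_prodMk_eq_contingencyTable, hv, hv₀]
  trans #{σ : Perm α | (fun a => (f a, v₀ a)) ∘ σ = fun a => (f a, v a)}
  · congr 1
    ext σ
    simp [funext_iff, forall_and]
  · rw [card_perm_comp_eq _ _ hfiber, Fintype.prod_prod_type]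
    simp_rw [card_prodMk_eq_contingencyTable, hv₀]

theorem card_perm_contingencyTable_mul_prod_factorial (f : α → β) (g : α → γ)
    (τ : β → γ → ℕ) (hrow : ∀ i, ∑ j, τ i j = #{a | f a = i})
    (hcol : ∀ j, ∑ i, τ i j = #{b | g b = j}) :
    #{σ : Perm α | contingencyTable f (g ∘ σ) = τ} * ∏ i, ∏ j, (τ i j)! =
      (∏ i, (#{a | f a = i})!) * ∏ j, (#{b | g b = j})! := by
  rw [card_perm_contingencyTable_eq f g τ hcol, prod_factorial_card_fiber_eq f τ hrow]
  ring

/-- permanent of a matrix with repeated rows and columns as a weighted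
sum over nonnegative-integer matrices with prescribed margins. -/
theorem stmt_0 (M k : ℕ) (U : Fin M → Fin M → ℂ) (f g : Fin k → Fin M)
    (n m : Fin M → ℕ)
    (hn : ∀ i, n i = (Finset.univ.filter fun a => f a = i).card)
    (hm : ∀ j, m j = (Finset.univ.filter fun b => g b = j).card)
    (S : Finset (Fin M → Fin M → ℕ))
    (hS : ∀ τ : Fin M → Fin M → ℕ,
      τ ∈ S ↔ ((∀ i, ∑ j, τ i j = n i) ∧ (∀ j, ∑ i, τ i j = m j))) :
    (∑ σ : Equiv.Perm (Fin k), ∏ a, U (f a) (g (σ a))) =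
      ∑ τ ∈ S,
        (((∏ i, Nat.factorial (n i) : ℕ) : ℂ) * ((∏ j, Nat.factorial (m j) : ℕ) : ℂ) /
            ((∏ i, ∏ j, Nat.factorial (τ i j) : ℕ) : ℂ)) *
          ∏ i, ∏ j, U i j ^ τ i j := by
  have hmaps : ∀ σ ∈ (univ : Finset (Equiv.Perm (Fin k))), contingencyTable f (g ∘ σ) ∈ S := by
    intro σ _
    refine (hS _).2 ⟨fun i => by rw [sum_contingencyTable_right, hn], fun j => ?_⟩
    rw [sum_contingencyTable_left, hm]
    exact card_equiv σ (by simp)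
  calc ∑ σ : Perm (Fin k), ∏ a, U (f a) (g (σ a))
      = ∑ σ : Perm (Fin k), ∏ i, ∏ j, U i j ^ contingencyTable f (g ∘ σ) i j :=
        sum_congr rfl fun σ _ => prod_eq_prod_pow_contingencyTable U f (g ∘ σ)
    _ = ∑ τ ∈ S, #{σ : Perm (Fin k) | contingencyTable f (g ∘ σ) = τ} *
          ∏ i, ∏ j, U i j ^ τ i j := by
        rw [← sum_fiberwise_of_maps_to hmaps]
        refine sum_congr rfl fun τ _ => ?_
        rw [sum_congr rfl fun σ hσ => by rw [(mem_filter.1 hσ).2], sum_const, nsmul_eq_mul]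
    _ = _ := by
        refine sum_congr rfl fun τ hτ => congrArg (· * _) ?_
        obtain ⟨hrow, hcol⟩ := (hS τ).1 hτ
        have key := card_perm_contingencyTable_mul_prod_factorial f g τ
          (fun i => (hrow i).trans (hn i)) (fun j => (hcol j).trans (hm j))
        simp only [← hn, ← hm] at key
        rw [eq_div_iff (Nat.cast_ne_zero.2 (by positivity))]
        exact_mod_cast key
end

section
/- Let M, k ∈ ℕ, let f, g : Fin k → Fin M, and for i, j ∈ Fin M set n(i) = |{a | f(a) = i}| and m(j) = |{b | g(b) = j}|. Let τ : Fin M → Fin M → ℕ satisfy Σ_j τ(i,j) = n(i) for all i and Σ_i τ(i,j) = m(j) for all j. Then the number of permutations σ of Fin k such that for every pair (i,j) one has |{a : Fin k | f(a) = i and g(σ(a)) = j}| = τ(i,j) equals (∏_i n(i)!) · (∏_j m(j)!) / (∏_{i,j} τ(i,j)!). -/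
/-!
Sort the permutations `σ` by the coloring `g ∘ σ`. The solutions of `g ∘ σ = h` form a coset of
the stabilizer of `g`, so each coloring `h` with the same fiber sizes as `g` arises from exactly
`∏ j, m(j)!` permutations. The colorings `h` whose joint fiber sizes with `f` are `τ` are chosen
independently on each fiber of `f`, and on the `i`-th fiber they are the colorings with fiber
sizes `τ(i, ·)`; by the same orbit–stabilizer count there are `n(i)! / ∏ j, τ(i,j)!` of them.
-/

open Equiv Function Fintype
open scoped Nat

theorem Fintype.card_eq_mul_of_forall_card_fiber_eq {X Y : Type*} [Fintype X] [Fintype Y]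
    [DecidableEq Y] (F : X → Y) {N : ℕ} (hF : ∀ y, card {x // F x = y} = N) :
    card X = card Y * N := by
  rw [← card_congr (sigmaFiberEquiv F), card_sigma, Finset.sum_congr rfl fun y _ => hF y,
    Finset.sum_const, smul_eq_mul, Finset.card_univ]

section Coloring

variable {α ι κ : Type*} [Fintype α] [Fintype ι] [DecidableEq ι] [DecidableEq κ]

theorem card_fiber_comp_perm (g : α → κ) (σ : Perm α) (j : κ) :
    card {a // g (σ a) = j} = card {a // g a = j} :=
  card_congr (σ.subtypeEquiv fun _ => Iff.rfl)

theorem card_fiber_eq_sum_card_fiber_and (f : α → ι) (h : α → κ) (j : κ) :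
    card {a // h a = j} = ∑ i, card {a // f a = i ∧ h a = j} := by
  simp only [Fintype.card_subtype]
  rw [Finset.card_eq_sum_card_fiberwise (f := f) (t := Finset.univ) fun _ _ => Finset.mem_univ _]
  simp only [Finset.filter_filter, and_comm]

theorem exists_perm_comp_eq_of_card_fiber_eq {g h : α → κ}
    (hgh : ∀ j, card {a // h a = j} = card {a // g a = j}) : ∃ σ : Perm α, g ∘ σ = h := by
  let e j : {a // h a = j} ≃ {a // g a = j} := equivOfCardEq (hgh j)
  exact ⟨(sigmaFiberEquiv h).symm.trans ((sigmaCongrRight e).trans (sigmaFiberEquiv g)),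
    funext fun a => (e (h a) ⟨a, rfl⟩).2⟩

theorem card_perm_comp_eq_s1 [DecidableEq α] [Fintype κ] {g h : α → κ}
    (hgh : ∀ j, card {a // h a = j} = card {a // g a = j}) :
    card {σ : Perm α // g ∘ σ = h} = ∏ j, (card {a // g a = j})! := by
  obtain ⟨σ₀, rfl⟩ := exists_perm_comp_eq_of_card_fiber_eq hgh
  rw [← DomMulAct.stabilizer_card g]
  exact card_congr (subtypeEquiv (Equiv.mulRight σ₀⁻¹) fun σ => (comp_symm_eq σ₀ g (g ∘ σ)).symm)

theorem card_coloring_with_card_fiber_mul [DecidableEq α] [Fintype κ] (c : κ → ℕ)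
    (hc : ∑ j, c j = card α) :
    card {u : α → κ // ∀ j, card {a // u a = j} = c j} * ∏ j, (c j)! = (card α)! := by
  obtain ⟨g, hg⟩ : ∃ g : α → κ, ∀ j, card {a // g a = j} = c j := by
    let e : (Σ j, Fin (c j)) ≃ α := equivOfCardEq (by simpa using hc)
    exact ⟨fun a => (e.symm a).1, fun j => by
      rw [card_congr ((e.symm.subtypeEquiv fun _ => Iff.rfl).trans (sigmaSubtype j)), card_fin]⟩
  rw [← card_perm]
  refine (card_eq_mul_of_forall_card_fiber_eq (fun σ : Perm α =>
    (⟨g ∘ σ, fun j => (card_fiber_comp_perm g σ j).trans (hg j)⟩ :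
      {u : α → κ // ∀ j, card {a // u a = j} = c j})) fun u => ?_).symm
  rw [card_congr (subtypeEquivRight fun σ => Subtype.ext_iff),
    card_perm_comp_eq_s1 fun j => (u.2 j).trans (hg j).symm]
  simp only [hg]

theorem card_coloring_with_pattern [DecidableEq α] [Fintype κ] (f : α → ι)
    (τ : ι → κ → ℕ) :
    card {h : α → κ // ∀ i j, card {a // f a = i ∧ h a = j} = τ i j} =
      ∏ i, card {u : {a // f a = i} → κ // ∀ j, card {x // u x = j} = τ i j} := by
  rw [← card_pi]
  let restrict : (α → κ) ≃ ∀ i, {a // f a = i} → κ :=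
    (arrowCongr (sigmaFiberEquiv f).symm (Equiv.refl κ)).trans (piCurry fun _ _ => κ)
  refine card_congr ((subtypeEquiv restrict fun h =>
    forall_congr' fun i => forall_congr' fun j => ?_).trans subtypePiEquivPi)
  rw [← card_congr (subtypeSubtypeEquivSubtypeInter (f · = i) (h · = j))]
  rfl

theorem card_coloring_with_pattern_mul [DecidableEq α] [Fintype κ]
    (f : α → ι) (τ : ι → κ → ℕ) (hrow : ∀ i, ∑ j, τ i j = card {a // f a = i}) :
    card {h : α → κ // ∀ i j, card {a // f a = i ∧ h a = j} = τ i j} * ∏ i, ∏ j, (τ i j)! =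
      ∏ i, (card {a // f a = i})! := by
  rw [card_coloring_with_pattern, ← Finset.prod_mul_distrib]
  exact Finset.prod_congr rfl fun i _ => card_coloring_with_card_fiber_mul (τ i) (hrow i)

theorem card_perm_with_pattern_mul [DecidableEq α] [Fintype κ]
    (f : α → ι) (g : α → κ) (τ : ι → κ → ℕ) (hrow : ∀ i, ∑ j, τ i j = card {a // f a = i})
    (hcol : ∀ j, ∑ i, τ i j = card {b // g b = j}) :
    card {σ : Perm α // ∀ i j, card {a // f a = i ∧ g (σ a) = j} = τ i j} *
        ∏ i, ∏ j, (τ i j)! =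
      (∏ i, (card {a // f a = i})!) * ∏ j, (card {b // g b = j})! := by
  let coloring (σ : {σ : Perm α // ∀ i j, card {a // f a = i ∧ g (σ a) = j} = τ i j}) :
      {h : α → κ // ∀ i j, card {a // f a = i ∧ h a = j} = τ i j} := ⟨g ∘ σ.1, σ.2⟩
  have hfiber : ∀ h, card {σ // coloring σ = h} = ∏ j, (card {b // g b = j})! := fun h => by
    rw [card_congr ((subtypeEquivRight fun σ => Subtype.ext_iff).trans
      (subtypeSubtypeEquivSubtype (q := fun σ : Perm α => g ∘ σ = h.1)
        fun hσ i j => by rw [← h.2 i j, ← hσ]; rfl))]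
    refine card_perm_comp_eq_s1 fun j => ?_
    rw [card_fiber_eq_sum_card_fiber_and f, ← hcol j]
    exact Finset.sum_congr rfl fun i _ => h.2 i j
  rw [card_eq_mul_of_forall_card_fiber_eq coloring hfiber, mul_right_comm,
    card_coloring_with_pattern_mul f τ hrow]

end Coloring

/-- fiber counting for the map from bipartite perfect matchings of the
blown-up graph to nonnegative-integer matrices with prescribed margins. -/
theorem stmt_1 (M k : ℕ) (f g : Fin k → Fin M) (n m : Fin M → ℕ)
    (hn : ∀ i, n i = (Finset.univ.filter fun a => f a = i).card)
    (hm : ∀ j, m j = (Finset.univ.filter fun b => g b = j).card)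
    (τ : Fin M → Fin M → ℕ)
    (hrow : ∀ i, ∑ j, τ i j = n i) (hcol : ∀ j, ∑ i, τ i j = m j) :
    (Finset.univ.filter fun σ : Equiv.Perm (Fin k) =>
        ∀ i j, (Finset.univ.filter fun a => f a = i ∧ g (σ a) = j).card = τ i j).card =
      (∏ i, Nat.factorial (n i)) * (∏ j, Nat.factorial (m j)) /
        ∏ i, ∏ j, Nat.factorial (τ i j) := by
  simp only [← Fintype.card_subtype] at hn hm ⊢
  refine Nat.eq_div_of_mul_eq_left (by positivity) ?_
  simp only [funext hn, funext hm] at hrow hcol ⊢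
  convert card_perm_with_pattern_mul f g τ hrow hcol using 3
end

section
/- For a ∈ ℂ and k ∈ ℕ define T_k(a) = Σ_σ a^{|{i : Fin k | i ≤ σ(i)}|}, where the sum is over all involutive permutations σ of Fin k (permutations with σ ∘ σ = id); equivalently T_k(a) is the loop hafnian of the k×k constant matrix all of whose entries equal a. Then T_0(a) = 1, T_1(a) = a, and for every k ≥ 2, T_k(a) = a · (T_{k−1}(a) + (k−1) · T_{k−2}(a)). -/
/-!
Split the involutions `σ` of `Fin (n + 2)` according to `p = σ 0`. For `p = 0`, deleting `0`
leaves an arbitrary involution of `Fin (n + 1)` and removes one orbit, giving `a * T (n + 1)`.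
For `p = q + 1`, `σ = swap 0 p * τ` with `τ` an involution fixing `0` and `p`, and deleting `0`
from `τ` gives an involution of `Fin (n + 1)` fixing `q`, with the same exponent. The exponent of
an involution of a linear order of size `k` is `(k + #fixed points) / 2`, a conjugation
invariant, so the involutions fixing `q` contribute as much as those fixing `0`, namely
`a * T n`, for each of the `n + 1` values of `q`.
-/

open Equiv Finset Function

namespace Equiv.Perm

section Involution

variable {α : Type*}

theorem involutive_iff_mul_self_eq_one {σ : Perm α} : Involutive σ ↔ σ * σ = 1 := by
  simp [Involutive, Perm.ext_iff]

theorem involutive_conj_iff {σ : Perm α} (τ : Perm α) :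
    Involutive (τ * σ * τ⁻¹) ↔ Involutive σ := by
  simp only [involutive_iff_mul_self_eq_one, ← MulAut.conj_apply, ← map_mul,
    map_eq_one_iff _ (MulAut.conj τ).injective]

theorem involutive_swap_mul_iff [DecidableEq α] {g : Perm α} {a b : α} (ha : g a = a) :
    Involutive (swap a b * g) ↔ Involutive g ∧ g b = b := by
  have hsq (hb : g b = b) : swap a b * g * (swap a b * g) = g * g := by
    have hcomm : Commute g (swap a b) := by
      rw [Commute, SemiconjBy, mul_swap_eq_swap_mul, ha, hb]
    rw [hcomm.mul_mul_mul_comm, swap_mul_self, one_mul]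
  refine ⟨fun h => ?_, fun ⟨hg, hb⟩ => ?_⟩
  · have hb : g b = b := by
      have := h a
      simp only [Perm.mul_apply, ha, swap_apply_left] at this
      rwa [swap_apply_eq_iff, swap_apply_left] at this
    rw [involutive_iff_mul_self_eq_one, hsq hb] at h
    exact ⟨involutive_iff_mul_self_eq_one.2 h, hb⟩
  · rw [involutive_iff_mul_self_eq_one, hsq hb, ← involutive_iff_mul_self_eq_one]
    exact hg

end Involution

section LinearOrder

variable {α : Type*} [Fintype α] [LinearOrder α]

theorem two_mul_card_le_apply_of_involutive {σ : Perm α} (hσ : Involutive σ) :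
    2 * #{i | i ≤ σ i} = Fintype.card α + #{i | σ i = i} := by
  have hsymm : #{i | i ≤ σ i} = #{i | σ i ≤ i} :=
    card_nbij' σ σ (fun i => by simp [hσ i]) (fun i => by simp [hσ i]) (fun i _ => hσ i)
      (fun i _ => hσ i)
  have hunion : ({i | i ≤ σ i} : Finset α) ∪ ({i | σ i ≤ i} : Finset α) = univ := by
    ext i; simp [le_total]
  have hinter :
      ({i | i ≤ σ i} : Finset α) ∩ ({i | σ i ≤ i} : Finset α) = ({i | σ i = i} : Finset α) := by
    ext i; simp [le_antisymm_iff, and_comm]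
  have hcard := card_union_add_card_inter ({i | i ≤ σ i} : Finset α) {i | σ i ≤ i}
  rw [hunion, hinter, card_univ, ← hsymm] at hcard
  omega

theorem card_fixed_add_card_support (σ : Perm α) :
    #{i | σ i = i} + #σ.support = Fintype.card α :=
  card_filter_add_card_filter_not _

theorem card_fixed_conj (σ τ : Perm α) : #{i | (τ * σ * τ⁻¹) i = i} = #{i | σ i = i} := by
  have h := card_fixed_add_card_support σ
  have hconj := card_fixed_add_card_support (τ * σ * τ⁻¹)
  rw [card_support_conj] at hconj
  omega

theorem card_le_apply_conj {σ : Perm α} (hσ : Involutive σ) (τ : Perm α) :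
    #{i | i ≤ (τ * σ * τ⁻¹) i} = #{i | i ≤ σ i} := by
  have h := two_mul_card_le_apply_of_involutive hσ
  have hconj := two_mul_card_le_apply_of_involutive ((involutive_conj_iff τ).2 hσ)
  rw [card_fixed_conj] at hconj
  omega

theorem card_le_swap_mul_add_one {g : Perm α} {a b : α} (hab : a < b) (ha : g a = a)
    (hb : g b = b) : #{i | i ≤ (swap a b * g) i} + 1 = #{i | i ≤ g i} := by
  have : ({i | i ≤ g i} : Finset α) = insert b ({i | i ≤ (swap a b * g) i} : Finset α) := by
    ext i
    simp only [mem_insert, mem_filter, mem_univ, true_and]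
    rw [Perm.mul_apply]
    by_cases hia : i = a; · simp [hia, ha, hab.le]
    by_cases hib : i = b; · simp [hib, hb]
    have hgi : g i ≠ a ∧ g i ≠ b := ⟨fun h => hia (g.injective (h.trans ha.symm)),
      fun h => hib (g.injective (h.trans hb.symm))⟩
    simp [hib, swap_apply_of_ne_of_ne hgi.1 hgi.2]
  rw [this, card_insert_of_notMem (by rw [mem_filter, Perm.mul_apply]; simp [hb, hab])]

end LinearOrder

section Fin

variable {n : ℕ}

theorem decomposeFin_symm_zero_apply_succ (e : Perm (Fin n)) (x : Fin n) :
    decomposeFin.symm (0, e) x.succ = (e x).succ := by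
  rw [decomposeFin_symm_apply_succ, swap_self, refl_apply]

theorem decomposeFin_symm_eq_swap_mul (p : Fin (n + 1)) (e : Perm (Fin n)) :
    decomposeFin.symm (p, e) = swap 0 p * decomposeFin.symm (0, e) := by
  ext i
  cases i using Fin.cases with
  | zero => simp [decomposeFin_symm_apply_zero]
  | succ x => rw [Perm.mul_apply, decomposeFin_symm_apply_succ, decomposeFin_symm_zero_apply_succ]

theorem involutive_decomposeFin_symm_zero_iff {e : Perm (Fin n)} :
    Involutive (decomposeFin.symm (0, e)) ↔ Involutive e := by
  refine ⟨fun h x => Fin.succ_injective _ ?_, fun h i => ?_⟩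
  · simpa [decomposeFin_symm_zero_apply_succ] using h x.succ
  · cases i using Fin.cases with
    | zero => simp [decomposeFin_symm_apply_zero]
    | succ x => simp [h x]

theorem card_le_decomposeFin_symm_zero (e : Perm (Fin n)) :
    #{i | i ≤ decomposeFin.symm (0, e) i} = #{i | i ≤ e i} + 1 := by
  rw [Fin.card_filter_univ_succ, if_pos (Fin.zero_le _)]
  simp

theorem involutive_decomposeFin_symm_succ_iff {q : Fin n} {e : Perm (Fin n)} :
    Involutive (decomposeFin.symm (q.succ, e)) ↔ Involutive e ∧ e q = q := by
  rw [decomposeFin_symm_eq_swap_mul, involutive_swap_mul_iff (decomposeFin_symm_apply_zero 0 e),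
    involutive_decomposeFin_symm_zero_iff, decomposeFin_symm_zero_apply_succ, Fin.succ_inj]

theorem card_le_decomposeFin_symm_succ {q : Fin n} {e : Perm (Fin n)} (he : e q = q) :
    #{i | i ≤ decomposeFin.symm (q.succ, e) i} = #{i | i ≤ e i} := by
  have hswap := card_le_swap_mul_add_one q.succ_pos (decomposeFin_symm_apply_zero 0 e)
    (by rw [decomposeFin_symm_zero_apply_succ, he])
  rw [← decomposeFin_symm_eq_swap_mul, card_le_decomposeFin_symm_zero] at hswap
  exact Nat.add_right_cancel hswap

theorem sum_filter_and_apply_zero_eq {M : Type*} [AddCommMonoid M]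
    (P : Perm (Fin (n + 1)) → Prop) [DecidablePred P] (f : Perm (Fin (n + 1)) → M)
    (p : Fin (n + 1)) :
    ∑ σ with P σ ∧ σ 0 = p, f σ =
      ∑ e with P (decomposeFin.symm (p, e)), f (decomposeFin.symm (p, e)) := by
  rw [sum_filter, sum_filter, ← decomposeFin.symm.sum_comp, Fintype.sum_prod_type, sum_comm]
  simp only [decomposeFin_symm_apply_zero, and_comm (a := P _), ite_and, sum_ite_eq', mem_univ,
    if_true]

end Fin

end Equiv.Perm

open Equiv.Perm

variable {R : Type*} [CommSemiring R]

def constLoopHafnian (a : R) (k : ℕ) : R :=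
  ∑ σ : Perm (Fin k) with (∀ i, σ (σ i) = i), a ^ #{i | i ≤ σ i}

theorem sum_involutive_fixing_eq {α : Type*} [Fintype α] [LinearOrder α] (a : R) (i j : α) :
    ∑ σ : Perm α with (∀ x, σ (σ x) = x) ∧ σ i = i, a ^ #{x | x ≤ σ x} =
      ∑ σ : Perm α with (∀ x, σ (σ x) = x) ∧ σ j = j, a ^ #{x | x ≤ σ x} := by
  refine sum_equiv (MulAut.conj (swap i j)).toEquiv (fun σ => ?_) (fun σ hσ => ?_)
  · simp only [mem_filter, mem_univ, true_and, MulEquiv.toEquiv_eq_coe, MulEquiv.coe_toEquiv,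
      MulAut.conj_apply]
    exact and_congr (involutive_conj_iff _).symm (by simp [swap_apply_eq_iff])
  · rw [MulEquiv.toEquiv_eq_coe, MulEquiv.coe_toEquiv, MulAut.conj_apply,
      card_le_apply_conj (mem_filter.1 hσ).2.1]

theorem sum_involutive_fixing_zero (a : R) (n : ℕ) :
    ∑ σ : Perm (Fin (n + 1)) with (∀ i, σ (σ i) = i) ∧ σ 0 = 0, a ^ #{i | i ≤ σ i} =
      a * constLoopHafnian a n := by
  rw [sum_filter_and_apply_zero_eq (fun σ => ∀ i, σ (σ i) = i), constLoopHafnian, mul_sum]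
  refine sum_congr (filter_congr fun e _ => involutive_decomposeFin_symm_zero_iff) fun e _ => ?_
  rw [card_le_decomposeFin_symm_zero, pow_succ']

theorem sum_involutive_apply_zero_eq_succ (a : R) {n : ℕ} (q : Fin n) :
    ∑ σ : Perm (Fin (n + 1)) with (∀ i, σ (σ i) = i) ∧ σ 0 = q.succ, a ^ #{i | i ≤ σ i} =
      ∑ e : Perm (Fin n) with (∀ i, e (e i) = i) ∧ e q = q, a ^ #{i | i ≤ e i} := by
  rw [sum_filter_and_apply_zero_eq (fun σ => ∀ i, σ (σ i) = i)]
  refine sum_congr (filter_congr fun e _ => involutive_decomposeFin_symm_succ_iff) fun e he => ?_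
  rw [card_le_decomposeFin_symm_succ (mem_filter.1 he).2.2]

theorem sum_involutive_fixing (a : R) {n : ℕ} (q : Fin (n + 1)) :
    ∑ σ : Perm (Fin (n + 1)) with (∀ i, σ (σ i) = i) ∧ σ q = q, a ^ #{i | i ≤ σ i} =
      a * constLoopHafnian a n := by
  rw [← sum_involutive_fixing_zero]
  -- `convert` bridges the decidability instances of `LinearOrder (Fin _)` and those of `Fin`
  convert sum_involutive_fixing_eq a q 0

theorem constLoopHafnian_succ (a : R) (n : ℕ) :
    constLoopHafnian a (n + 1) =
      a * constLoopHafnian a n +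
        ∑ q : Fin n, ∑ e : Perm (Fin n) with (∀ i, e (e i) = i) ∧ e q = q, a ^ #{i | i ≤ e i} := by
  rw [constLoopHafnian, ← sum_fiberwise _ (fun σ => σ 0), Fin.sum_univ_succ]
  simp only [filter_filter, sum_involutive_fixing_zero, sum_involutive_apply_zero_eq_succ]

theorem constLoopHafnian_zero (a : R) : constLoopHafnian a 0 = 1 := by
  simp [constLoopHafnian]

theorem constLoopHafnian_one (a : R) : constLoopHafnian a 1 = a := by
  simp [constLoopHafnian_succ, constLoopHafnian_zero]

theorem constLoopHafnian_add_two (a : R) (n : ℕ) :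
    constLoopHafnian a (n + 2) =
      a * (constLoopHafnian a (n + 1) + (n + 1) * constLoopHafnian a n) := by
  rw [constLoopHafnian_succ]
  simp only [sum_involutive_fixing, sum_const, card_univ, Fintype.card_fin, nsmul_eq_mul]
  push_cast
  ring

/-- recursion for the loop hafnian `T_k(a)` of the constant `k × k`
matrix with all entries equal to `a`, where `T_k(a)` is the sum over involutive
permutations `σ` of `Fin k` of `a` raised to the number of `i` with `i ≤ σ i`. -/
theorem stmt_2 (a : ℂ) (T : ℕ → ℂ)
    (hT : ∀ k, T k =
      ∑ σ ∈ Finset.univ.filter (fun σ : Equiv.Perm (Fin k) => ⇑σ ∘ ⇑σ = id),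
        a ^ (Finset.univ.filter fun i => i ≤ σ i).card) :
    T 0 = 1 ∧ T 1 = a ∧
      ∀ k, 2 ≤ k → T k = a * (T (k - 1) + ((k - 1 : ℕ) : ℂ) * T (k - 2)) := by
  obtain rfl : T = constLoopHafnian a := funext fun k => by
    rw [hT, constLoopHafnian]
    refine sum_congr (filter_congr fun σ _ => ?_) fun _ _ => rfl
    exact ⟨fun h => congrFun h, Involutive.comp_self⟩
  refine ⟨constLoopHafnian_zero a, constLoopHafnian_one a, fun k hk => ?_⟩
  obtain ⟨n, rfl⟩ := Nat.exists_eq_add_of_le' hk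
  simpa using constLoopHafnian_add_two a n
end

section
/- Let U : ℕ → ℕ → ℂ be a matrix, let D, Y ⊆ ℕ be finite sets, and let R, C ⊆ ℕ. Then Σ (−1)^{|D'|} · per_U(D', Y') · per_U(D \ D', Y \ Y') = Σ_π ∏_{a ∈ D} U(a, π(a)), where the left sum is over all pairs (D', Y') with D' ⊆ D ∩ R and Y' ⊆ Y ∩ C, and the right sum is over all bijections π : D → Y such that there is no a ∈ D with a ∈ R and π(a) ∈ C. -/
/-!
Expanding the product, `per_U(D', Y') · per_U(D \ D', Y \ Y')` is the sum of `∏ U(a, π a)` over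
the bijections `π : D → Y` that map `D'` onto `Y'`. After exchanging the sums, a fixed `π` is
counted with weight `∑ (-1)^|D'|` over the `D' ⊆ D ∩ R` with `π(D') ⊆ C` (the partner `Y' = π(D')`
is forced), that is, over all subsets of `{a ∈ D ∩ R | π a ∈ C}`; this alternating sum is `1` when
that set is empty and `0` otherwise.
-/

/-- The partial permanent of `U` over finite sets `D, Y ⊆ ℕ`: the sum over all
bijections `e : D → Y` of `∏_{a ∈ D} U a (e a)` (zero when `|D| ≠ |Y|`). -/
noncomputable def pper (U : ℕ → ℕ → ℂ) (D Y : Finset ℕ) : ℂ :=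
  ∑ e : {x // x ∈ D} ≃ {y // y ∈ Y}, ∏ a : {x // x ∈ D}, U (a : ℕ) ((e a : ℕ))

open Finset

section SplitEquiv

variable {α β : Type*} {p : α → Prop} {q : β → Prop} [DecidablePred p] [DecidablePred q]

def Equiv.sumComplCongr (e₁ : {a // p a} ≃ {b // q b}) (e₂ : {a // ¬p a} ≃ {b // ¬q b}) :
    α ≃ β :=
  (Equiv.sumCompl p).symm.trans ((e₁.sumCongr e₂).trans (Equiv.sumCompl q))

@[simp] lemma Equiv.sumComplCongr_apply_of_pos (e₁ : {a // p a} ≃ {b // q b})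
    (e₂ : {a // ¬p a} ≃ {b // ¬q b}) {a : α} (h : p a) :
    Equiv.sumComplCongr e₁ e₂ a = e₁ ⟨a, h⟩ := by
  simp [Equiv.sumComplCongr, h]

@[simp] lemma Equiv.sumComplCongr_apply_of_neg (e₁ : {a // p a} ≃ {b // q b})
    (e₂ : {a // ¬p a} ≃ {b // ¬q b}) {a : α} (h : ¬p a) :
    Equiv.sumComplCongr e₁ e₂ a = e₂ ⟨a, h⟩ := by
  simp [Equiv.sumComplCongr, h]

lemma Equiv.sumComplCongr_respects (e₁ : {a // p a} ≃ {b // q b})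
    (e₂ : {a // ¬p a} ≃ {b // ¬q b}) (a : α) : p a ↔ q (Equiv.sumComplCongr e₁ e₂ a) := by
  by_cases h : p a
  · simpa [h] using (e₁ ⟨a, h⟩).2
  · simpa [h] using (e₂ ⟨a, h⟩).2

variable (p q) in
def Equiv.respectingEquivProd : {e : α ≃ β // ∀ a, p a ↔ q (e a)} ≃
    ({a // p a} ≃ {b // q b}) × ({a // ¬p a} ≃ {b // ¬q b}) where
  toFun e := (e.1.subtypeEquiv e.2, e.1.subtypeEquiv fun a => not_congr (e.2 a))
  invFun e := ⟨Equiv.sumComplCongr e.1 e.2, Equiv.sumComplCongr_respects e.1 e.2⟩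
  left_inv e := by
    ext a
    by_cases h : p a <;> simp [h]
  right_inv e := by
    ext a <;> simp [a.2]

end SplitEquiv

section BijPermanent

variable {α β α' β' M : Type*} [Fintype α] [Fintype β] [DecidableEq α] [DecidableEq β]
  [CommSemiring M]

def bijPermanent (f : α → β → M) : M :=
  ∑ e : α ≃ β, ∏ a, f a (e a)

lemma bijPermanent_comp_equiv [Fintype α'] [Fintype β'] [DecidableEq α'] [DecidableEq β']
    (σ : α' ≃ α) (τ : β' ≃ β) (f : α → β → M) :
    bijPermanent (fun a b => f (σ a) (τ b)) = bijPermanent f := by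
  refine Fintype.sum_equiv (σ.equivCongr τ) _ _ fun e => ?_
  exact Fintype.prod_equiv σ _ _ fun a => by simp

lemma sum_filter_respects_eq_bijPermanent_mul (p : α → Prop) (q : β → Prop) [DecidablePred p]
    [DecidablePred q] (f : α → β → M) :
    ∑ e ∈ univ.filter (fun e : α ≃ β => ∀ a, p a ↔ q (e a)), ∏ a, f a (e a) =
      bijPermanent (fun (a : {a // p a}) (b : {b // q b}) => f a b) *
        bijPermanent (fun (a : {a // ¬p a}) (b : {b // ¬q b}) => f a b) := by
  rw [bijPermanent, bijPermanent, sum_mul_sum, ← Fintype.sum_prod_type',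
    Finset.sum_subtype (p := fun e : α ≃ β => ∀ a, p a ↔ q (e a)) _ (by simp)]
  refine Fintype.sum_equiv (Equiv.respectingEquivProd p q) _ _ fun e => ?_
  rw [← Fintype.prod_subtype_mul_prod_subtype p]
  rfl

end BijPermanent

def Equiv.subtypeFinsetOfMemIff {ι : Type*} {D S : Finset ι} {P : ι → Prop}
    (h : ∀ x, x ∈ S ↔ x ∈ D ∧ P x) : {a : D // P a} ≃ S :=
  (Equiv.subtypeSubtypeEquivSubtypeInter (· ∈ D) P).trans
    (Equiv.subtypeEquivRight fun x => (h x).symm)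

lemma sum_filter_respects_eq_pper_mul_pper (U : ℕ → ℕ → ℂ) {D' D Y' Y : Finset ℕ} (hD : D' ⊆ D)
    (hY : Y' ⊆ Y) :
    ∑ e ∈ univ.filter (fun e : D ≃ Y => ∀ a : D, (a : ℕ) ∈ D' ↔ (e a : ℕ) ∈ Y'),
        ∏ a : D, U a (e a) = pper U D' Y' * pper U (D \ D') (Y \ Y') := by
  rw [sum_filter_respects_eq_bijPermanent_mul (fun a : D => (a : ℕ) ∈ D')
    (fun b : Y => (b : ℕ) ∈ Y') fun a b => U a b]
  congr 1
  · exact bijPermanent_comp_equiv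
      (Equiv.subtypeFinsetOfMemIff fun _ => ⟨fun h => ⟨hD h, h⟩, And.right⟩)
      (Equiv.subtypeFinsetOfMemIff fun _ => ⟨fun h => ⟨hY h, h⟩, And.right⟩)
      fun (x : D') (y : Y') => U x y
  · exact bijPermanent_comp_equiv (Equiv.subtypeFinsetOfMemIff fun _ => mem_sdiff)
      (Equiv.subtypeFinsetOfMemIff fun _ => mem_sdiff)
      fun (x : ↥(D \ D')) (y : ↥(Y \ Y')) => U x y

lemma Finset.sum_powerset_neg_one_pow_card' {ι M : Type*} [DecidableEq ι] [Ring M]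
    (s : Finset ι) :
    ∑ t ∈ s.powerset, (-1 : M) ^ #t = if s = ∅ then 1 else 0 := by
  have h := congrArg (Int.cast : ℤ → M) (sum_powerset_neg_one_pow_card (x := s))
  push_cast at h
  rw [h]

section EquivImage

variable {ι κ M : Type*} [DecidableEq ι] [DecidableEq κ] {D : Finset ι} {Y : Finset κ}

def equivImage (e : D ≃ Y) (D' : Finset ι) : Finset κ :=
  (univ.filter fun a : D => (a : ι) ∈ D').image fun a => (e a : κ)

lemma mem_equivImage {e : D ≃ Y} {D' : Finset ι} {y : κ} :
    y ∈ equivImage e D' ↔ ∃ a : D, (a : ι) ∈ D' ∧ (e a : κ) = y := by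
  simp [equivImage]

lemma forall_mem_iff_mem_iff_eq_equivImage (e : D ≃ Y) (D' : Finset ι) {Y' : Finset κ}
    (hY' : Y' ⊆ Y) : (∀ a : D, (a : ι) ∈ D' ↔ (e a : κ) ∈ Y') ↔ Y' = equivImage e D' := by
  constructor
  · intro h
    ext y
    rw [mem_equivImage]
    constructor
    · intro hy
      exact ⟨e.symm ⟨y, hY' hy⟩, (h _).2 (by simpa using hy), by simp⟩
    · rintro ⟨a, ha, rfl⟩
      exact (h a).1 ha
  · rintro rfl a
    rw [mem_equivImage]
    refine ⟨fun ha => ⟨a, ha, rfl⟩, ?_⟩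
    rintro ⟨b, hb, hba⟩
    rwa [← e.injective (Subtype.ext hba)]

lemma sum_powerset_ite_respects [AddCommMonoid M] (e : D ≃ Y) (D' : Finset ι) {T : Finset κ}
    (hT : T ⊆ Y) (c : M) :
    ∑ Y' ∈ T.powerset, (if ∀ a : D, (a : ι) ∈ D' ↔ (e a : κ) ∈ Y' then c else 0) =
      if ∀ a : D, (a : ι) ∈ D' → (e a : κ) ∈ T then c else 0 := by
  rw [sum_congr rfl fun Y' hY' => if_congr
    (forall_mem_iff_mem_iff_eq_equivImage e D' ((mem_powerset.1 hY').trans hT)) rfl rfl,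
    sum_ite_eq']
  refine if_congr ⟨fun h a ha => mem_powerset.1 h (mem_equivImage.2 ⟨a, ha, rfl⟩), ?_⟩ rfl rfl
  intro h
  refine mem_powerset.2 fun y hy => ?_
  obtain ⟨a, ha, rfl⟩ := mem_equivImage.1 hy
  exact h a ha

lemma sum_powerset_sum_powerset_ite_respects [Ring M] (e : D ≃ Y) (R : Set ι) (C : Set κ)
    [DecidablePred (· ∈ R)] [DecidablePred (· ∈ C)] :
    ∑ D' ∈ (D.filter (· ∈ R)).powerset, ∑ Y' ∈ (Y.filter (· ∈ C)).powerset,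
        (if ∀ a : D, (a : ι) ∈ D' ↔ (e a : κ) ∈ Y' then (-1 : M) ^ #D' else 0) =
      if ∀ a : D, ¬((a : ι) ∈ R ∧ (e a : κ) ∈ C) then 1 else 0 := by
  set bad := (univ.filter fun a : D => (a : ι) ∈ R ∧ (e a : κ) ∈ C).image Subtype.val
  have hbad : bad ⊆ D.filter (· ∈ R) := by
    intro x hx
    obtain ⟨a, ha, rfl⟩ := mem_image.1 hx
    exact mem_filter.2 ⟨a.2, (mem_filter.1 ha).2.1⟩
  have hsubset : ∀ D' ⊆ D.filter (· ∈ R),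
      (∀ a : D, (a : ι) ∈ D' → (e a : κ) ∈ Y.filter (· ∈ C)) ↔ D' ⊆ bad := by
    intro D' hD'
    constructor
    · intro h x hx
      have hxD := (mem_filter.1 (hD' hx)).1
      exact mem_image.2 ⟨⟨x, hxD⟩, mem_filter.2 ⟨mem_univ _, (mem_filter.1 (hD' hx)).2,
        (mem_filter.1 (h ⟨x, hxD⟩ hx)).2⟩, rfl⟩
    · intro h a ha
      obtain ⟨b, hb, hba⟩ := mem_image.1 (h ha)
      rw [← Subtype.ext hba]
      exact mem_filter.2 ⟨(e b).2, (mem_filter.1 hb).2.2⟩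
  calc _ = ∑ D' ∈ (D.filter (· ∈ R)).powerset, if D' ⊆ bad then (-1 : M) ^ #D' else 0 :=
        sum_congr rfl fun D' hD' => by
          rw [sum_powerset_ite_respects e D' (filter_subset _ _),
            if_congr (hsubset D' (mem_powerset.1 hD')) rfl rfl]
    _ = ∑ D' ∈ bad.powerset, (-1 : M) ^ #D' := by
        rw [← sum_filter]
        congr 1
        ext D'
        simpa using fun h : D' ⊆ bad => h.trans hbad
    _ = _ := by
        rw [sum_powerset_neg_one_pow_card']
        refine if_congr ?_ rfl rfl
        simp [bad, filter_eq_empty_iff]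

end EquivImage

/-- inclusion–exclusion identity for the sum over bijections `π : D → Y`
avoiding all pairs `(a, π a) ∈ R × C`. -/
theorem stmt_5 (U : ℕ → ℕ → ℂ) (D Y : Finset ℕ) (R C : Set ℕ)
    [DecidablePred (· ∈ R)] [DecidablePred (· ∈ C)] :
    (∑ D' ∈ (D.filter (· ∈ R)).powerset, ∑ Y' ∈ (Y.filter (· ∈ C)).powerset,
        (-1 : ℂ) ^ D'.card * pper U D' Y' * pper U (D \ D') (Y \ Y')) =
      ∑ e ∈ Finset.univ.filter
          (fun e : {x // x ∈ D} ≃ {y // y ∈ Y} =>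
            ∀ a : {x // x ∈ D}, ¬((a : ℕ) ∈ R ∧ ((e a : ℕ)) ∈ C)),
        ∏ a : {x // x ∈ D}, U (a : ℕ) ((e a : ℕ)) := by
  calc _ = ∑ D' ∈ (D.filter (· ∈ R)).powerset, ∑ Y' ∈ (Y.filter (· ∈ C)).powerset,
          ∑ e : D ≃ Y, (if ∀ a : D, (a : ℕ) ∈ D' ↔ (e a : ℕ) ∈ Y' then (-1 : ℂ) ^ #D' else 0) *
            ∏ a : D, U a (e a) := by
        refine sum_congr rfl fun D' hD' => sum_congr rfl fun Y' hY' => ?_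
        rw [mul_assoc, ← sum_filter_respects_eq_pper_mul_pper U
          ((mem_powerset.1 hD').trans (filter_subset _ _))
          ((mem_powerset.1 hY').trans (filter_subset _ _)), sum_filter, mul_sum]
        simp only [mul_ite, ite_mul, mul_zero, zero_mul]
    _ = ∑ e : D ≃ Y, (if ∀ a : D, ¬((a : ℕ) ∈ R ∧ (e a : ℕ) ∈ C) then 1 else 0) *
          ∏ a : D, U a (e a) := by
        simp only [← sum_powerset_sum_powerset_ite_respects, sum_mul]
        exact (sum_congr rfl fun _ _ => sum_comm).trans sum_comm
    _ = _ := by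
        rw [sum_filter]
        simp only [ite_mul, one_mul, zero_mul]
end

section
/- Let B : ℕ → ℕ → ℂ be symmetric, let Y ⊆ ℕ be a finite set and C ⊆ ℕ. Writing lhaf_B(s) for the partial loop hafnian of a finite set s and lhaf_{−B}(s) for the same quantity with B replaced by −B, one has Σ_{T ⊆ Y ∩ C} lhaf_{−B}(T) · lhaf_B(Y \ T) = Σ_σ ∏_{i ∈ Y, i ≤ σ(i)} B(i, σ(i)), where the right-hand sum is over all involutive bijections σ of Y such that for every i ∈ Y ∩ C one has σ(i) ∉ C (i.e., σ contains no matched pair, and no loop, lying entirely inside C). -/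
/-- The partial loop hafnian of a finite set `s ⊆ ℕ` with respect to `B`:
the sum over involutive bijections `σ` of `s` of `∏_{i ∈ s, i ≤ σ i} B i (σ i)`. -/
noncomputable def lhaf (B : ℕ → ℕ → ℂ) (s : Finset ℕ) : ℂ :=
  ∑ σ ∈ Finset.univ.filter (fun σ : Equiv.Perm {x // x ∈ s} => ∀ x, σ (σ x) = x),
    ∏ i ∈ Finset.univ.filter (fun i : {x // x ∈ s} => (i : ℕ) ≤ (σ i : ℕ)),
      B (i : ℕ) ((σ i : ℕ))

/-!
Expanding both loop hafnians, a term on the left is an involution of `T` together with one of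
`Y \ T`; glued together they form an involution `h` of `Y` for which `T ⊆ Y ∩ C` is
`h`-invariant, and the sign is `(-1)` to the number of orbits of `h` (pairs and loops) in `T`.
For fixed `h` the invariant `T` are the unions of the sets `S ⊆ P`, where `P` is the set of
orbits of `h` lying inside `Y ∩ C`; so the signs add up to `∑_{S ⊆ P} (-1)^|S|`, which is `1`
if `P = ∅` and `0` otherwise. Involutions of a finite set are handled as functions `ℕ → ℕ`
fixing its complement.
-/

open Finset Function

namespace Finset

section Involutions

variable {α : Type*} [DecidableEq α] {s Y D : Finset α} {f g h : α → α}

def extendPerm (s : Finset α) (σ : Equiv.Perm s) : α → α :=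
  fun n => if hn : n ∈ s then σ ⟨n, hn⟩ else n

lemma extendPerm_coe (σ : Equiv.Perm s) (x : s) : extendPerm s σ x = σ x := by
  simp [extendPerm]

lemma extendPerm_injective (s : Finset α) : Injective (extendPerm s) := fun σ τ hστ =>
  Equiv.ext fun x => Subtype.ext <| by
    simpa only [extendPerm_coe] using congrFun hστ x

def involutionsOn (s : Finset α) : Finset (α → α) :=
  (univ.filter fun σ : Equiv.Perm s => ∀ x, σ (σ x) = x).map
    ⟨extendPerm s, extendPerm_injective s⟩

lemma apply_mem_iff_of_involutive (hf : Involutive f) (hfix : ∀ n ∉ s, f n = n) {n : α} :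
    f n ∈ s ↔ n ∈ s := by
  refine ⟨fun hfn => ?_, fun hn => ?_⟩
  · by_contra hn
    exact hn (hfix n hn ▸ hfn)
  · by_contra hfn
    have := hfix _ hfn
    rw [hf n] at this
    exact hfn (this ▸ hn)

lemma mem_involutionsOn : f ∈ involutionsOn s ↔ Involutive f ∧ ∀ n ∉ s, f n = n := by
  constructor
  · simp only [involutionsOn, mem_map, mem_filter, mem_univ, true_and, Embedding.coeFn_mk]
    rintro ⟨σ, hσ, rfl⟩
    refine ⟨fun n => ?_, fun n hn => by simp [extendPerm, hn]⟩
    by_cases hn : n ∈ s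
    · simp [extendPerm, hn, hσ]
    · simp [extendPerm, hn]
  · rintro ⟨hf, hfix⟩
    let σ : Equiv.Perm s :=
      { toFun := fun x => ⟨f x, (apply_mem_iff_of_involutive hf hfix).2 x.2⟩
        invFun := fun x => ⟨f x, (apply_mem_iff_of_involutive hf hfix).2 x.2⟩
        left_inv := fun x => Subtype.ext (hf x)
        right_inv := fun x => Subtype.ext (hf x) }
    simp only [involutionsOn, mem_map, mem_filter, mem_univ, true_and, Embedding.coeFn_mk]
    refine ⟨σ, fun x => Subtype.ext (hf x), funext fun n => ?_⟩
    by_cases hn : n ∈ s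
    · simp [extendPerm, hn, σ]
    · simp [extendPerm, hn, hfix n hn]

lemma apply_mem_iff_of_mem_involutionsOn (hf : f ∈ involutionsOn s) {n : α} :
    f n ∈ s ↔ n ∈ s :=
  apply_mem_iff_of_involutive (mem_involutionsOn.1 hf).1 (mem_involutionsOn.1 hf).2

lemma piecewise_mem_involutionsOn (hsY : s ⊆ Y) (hf : f ∈ involutionsOn s)
    (hg : g ∈ involutionsOn (Y \ s)) : s.piecewise f g ∈ involutionsOn Y := by
  obtain ⟨hf_inv, hf_fix⟩ := mem_involutionsOn.1 hf
  obtain ⟨hg_inv, hg_fix⟩ := mem_involutionsOn.1 hg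
  refine mem_involutionsOn.2 ⟨fun n => ?_, fun n hn => ?_⟩
  · by_cases hn : n ∈ s
    · have hfn : f n ∈ s := (apply_mem_iff_of_mem_involutionsOn hf).2 hn
      rw [piecewise_eq_of_mem _ _ _ hn, piecewise_eq_of_mem _ _ _ hfn, hf_inv]
    · have hgn : g n ∉ s := fun hgn => hn <| by
        rwa [← hg_inv n, hg_fix _ fun h => (mem_sdiff.1 h).2 hgn]
      rw [piecewise_eq_of_notMem _ _ _ hn, piecewise_eq_of_notMem _ _ _ hgn, hg_inv]
  · rw [piecewise_eq_of_notMem _ _ _ fun h => hn (hsY h)]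
    exact hg_fix n fun h => hn (mem_sdiff.1 h).1

lemma piecewise_id_mem_involutionsOn (hh : Involutive h) (hs : ∀ n ∈ s, h n ∈ s) :
    s.piecewise h id ∈ involutionsOn s := by
  refine mem_involutionsOn.2 ⟨fun n => ?_, fun n hn => piecewise_eq_of_notMem _ _ _ hn⟩
  by_cases hn : n ∈ s
  · rw [piecewise_eq_of_mem _ _ _ hn, piecewise_eq_of_mem _ _ _ (hs n hn), hh]
  · simp [hn]

lemma piecewise_id_eq_of_mem_involutionsOn (hf : f ∈ involutionsOn s)
    (hfg : ∀ n ∈ s, g n = f n) :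
    s.piecewise g id = f := by
  funext n
  by_cases hn : n ∈ s
  · rw [piecewise_eq_of_mem _ _ _ hn, hfg n hn]
  · rw [piecewise_eq_of_notMem _ _ _ hn, (mem_involutionsOn.1 hf).2 n hn, id]

lemma sum_powerset_sum_involutionsOn_sdiff {R : Type*} [AddCommMonoid R] (hDY : D ⊆ Y)
    (Φ : Finset α → (α → α) → (α → α) → R) :
    ∑ T ∈ D.powerset, ∑ f ∈ involutionsOn T, ∑ g ∈ involutionsOn (Y \ T), Φ T f g =
      ∑ h ∈ involutionsOn Y, ∑ T ∈ D.powerset with ∀ n ∈ T, h n ∈ T,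
        Φ T (T.piecewise h id) ((Y \ T).piecewise h id) := by
  simp_rw [← sum_product' (involutionsOn _), sum_sigma']
  symm
  refine sum_nbij' (fun y => ⟨y.2, (y.2.piecewise y.1 id, (Y \ y.2).piecewise y.1 id)⟩)
    (fun x => ⟨x.1.piecewise x.2.1 x.2.2, x.1⟩) ?_ ?_ ?_ ?_ fun _ _ => rfl
  · rintro ⟨h, T⟩ hy
    simp only [mem_sigma, mem_powerset, mem_product, mem_filter] at hy ⊢
    obtain ⟨hh, hTD, hT⟩ := hy
    have hinv := (mem_involutionsOn.1 hh).1
    refine ⟨hTD, piecewise_id_mem_involutionsOn hinv hT,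
      piecewise_id_mem_involutionsOn hinv fun n hn => ?_⟩
    obtain ⟨hnY, hnT⟩ := mem_sdiff.1 hn
    refine mem_sdiff.2 ⟨(apply_mem_iff_of_mem_involutionsOn hh).2 hnY, fun hhn => hnT ?_⟩
    simpa only [hinv n] using hT _ hhn
  · rintro ⟨T, f, g⟩ hx
    simp only [mem_sigma, mem_powerset, mem_product, mem_filter] at hx ⊢
    exact ⟨piecewise_mem_involutionsOn (hx.1.trans hDY) hx.2.1 hx.2.2, hx.1, fun n hn => by
      rw [piecewise_eq_of_mem _ _ _ hn]; exact (apply_mem_iff_of_mem_involutionsOn hx.2.1).2 hn⟩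
  · rintro ⟨h, T⟩ hy
    simp only [mem_sigma, mem_powerset, mem_filter] at hy
    simp only [Sigma.mk.injEq, heq_eq_eq, and_true]
    funext n
    by_cases hnT : n ∈ T
    · simp [hnT]
    by_cases hnY : n ∈ Y
    · simp [hnT, hnY]
    · simp [hnT, hnY, (mem_involutionsOn.1 hy.1).2 n hnY]
  · rintro ⟨T, f, g⟩ hx
    simp only [mem_sigma, mem_powerset, mem_product] at hx
    simp only [Sigma.mk.injEq, heq_eq_eq, Prod.mk.injEq, true_and]
    exact ⟨piecewise_id_eq_of_mem_involutionsOn hx.2.1 fun n hn => piecewise_eq_of_mem _ _ _ hn,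
      piecewise_id_eq_of_mem_involutionsOn hx.2.2 fun n hn =>
        piecewise_eq_of_notMem _ _ _ (mem_sdiff.1 hn).2⟩

end Involutions

section Weights

variable {α M : Type*} [LinearOrder α] [CommMonoid M] {s Y : Finset α} {f g h : α → α}

/-- Each loop `i = f i` and each pair `{i, f i}` of `f` on `s` contributes `B i (f i)` once. -/
def pairingWeight (B : α → α → M) (s : Finset α) (f : α → α) : M :=
  ∏ i ∈ s with i ≤ f i, B i (f i)

lemma pairingWeight_congr (B : α → α → M) (hfg : ∀ i ∈ s, f i = g i) :
    pairingWeight B s f = pairingWeight B s g :=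
  prod_congr (filter_congr fun i hi => by rw [hfg i hi]) fun i hi => by
    rw [hfg i (mem_filter.1 hi).1]

lemma pairingWeight_piecewise_id (B : α → α → M) :
    pairingWeight B s (s.piecewise f id) = pairingWeight B s f :=
  pairingWeight_congr B fun _ hi => piecewise_eq_of_mem _ _ _ hi

lemma pairingWeight_neg [HasDistribNeg M] (B : α → α → M) :
    pairingWeight (fun i j => -B i j) s f = (-1) ^ #{i ∈ s | i ≤ f i} * pairingWeight B s f :=
  prod_neg _

lemma pairingWeight_mul_pairingWeight_sdiff (B : α → α → M) (hsY : s ⊆ Y) :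
    pairingWeight B s f * pairingWeight B (Y \ s) f = pairingWeight B Y f := by
  simp only [pairingWeight, prod_filter]
  rw [mul_comm, prod_sdiff hsY]

lemma prod_perm_eq_pairingWeight (B : α → α → M) (σ : Equiv.Perm s) :
    ∏ i ∈ univ.filter (fun i : s => (i : α) ≤ σ i), B i (σ i) =
      pairingWeight B s (extendPerm s σ) := by
  rw [pairingWeight, prod_filter, prod_filter, univ_eq_attach, ← prod_attach s]
  simp only [extendPerm_coe]

/-- An `h`-invariant `T` is a union of orbits of `h`, each recorded by its least element. -/
lemma sum_invariant_powerset_eq_sum_powerset {N : Type*} [AddCommMonoid N] (hh : Involutive h)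
    (D : Finset α) (F : Finset α → N) :
    ∑ T ∈ D.powerset with ∀ n ∈ T, h n ∈ T, F {i ∈ T | i ≤ h i} =
      ∑ S ∈ ({i ∈ D | i ≤ h i ∧ h i ∈ D} : Finset α).powerset, F S := by
  refine sum_nbij' (fun T => {i ∈ T | i ≤ h i}) (fun S => S ∪ S.image h) ?_ ?_ ?_ ?_
    fun _ _ => rfl
  · intro T hT
    simp only [mem_filter, mem_powerset] at hT
    rw [mem_powerset]
    intro i hi
    obtain ⟨hiT, hle⟩ := mem_filter.1 hi
    exact mem_filter.2 ⟨hT.1 hiT, hle, hT.1 (hT.2 i hiT)⟩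
  · intro S hS
    rw [mem_powerset] at hS
    simp only [mem_filter, mem_powerset, union_subset_iff, mem_union, mem_image]
    refine ⟨⟨hS.trans (filter_subset _ _), ?_⟩, ?_⟩
    · intro n hn
      obtain ⟨i, hi, rfl⟩ := mem_image.1 hn
      exact (mem_filter.1 (hS hi)).2.2
    · rintro n (hn | ⟨i, hi, rfl⟩)
      · exact Or.inr ⟨n, hn, rfl⟩
      · exact Or.inl (by rwa [hh])
  · intro T hT
    simp only [mem_filter, mem_powerset] at hT
    ext n
    simp only [mem_union, mem_filter, mem_image]
    refine ⟨?_, fun hn => ?_⟩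
    · rintro (⟨hn, _⟩ | ⟨i, ⟨hi, _⟩, rfl⟩)
      exacts [hn, hT.2 i hi]
    · rcases le_total n (h n) with hle | hle
      · exact Or.inl ⟨hn, hle⟩
      · exact Or.inr ⟨h n, ⟨hT.2 n hn, by rwa [hh]⟩, hh n⟩
  · intro S hS
    rw [mem_powerset] at hS
    ext n
    simp only [mem_filter, mem_union, mem_image]
    refine ⟨?_, fun hn => ⟨Or.inl hn, (mem_filter.1 (hS hn)).2.1⟩⟩
    rintro ⟨hn | ⟨i, hi, rfl⟩, hle⟩
    · exact hn
    · rw [hh] at hle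
      rwa [le_antisymm (mem_filter.1 (hS hi)).2.1 hle] at hi

lemma sum_invariant_powerset_neg_one_pow {R : Type*} [Ring R] (hh : Involutive h) (D : Finset α) :
    ∑ T ∈ D.powerset with ∀ n ∈ T, h n ∈ T, (-1 : R) ^ #{i ∈ T | i ≤ h i} =
      if ∀ i ∈ D, h i ∉ D then 1 else 0 := by
  set P : Finset α := {i ∈ D | i ≤ h i ∧ h i ∈ D}
  have hP : P = ∅ ↔ ∀ i ∈ D, h i ∉ D := by
    refine ⟨fun hP i hi hhi => ?_, fun hD => filter_eq_empty_iff.2 fun i hi hP => hD i hi hP.2⟩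
    rcases le_total i (h i) with hle | hle
    · exact (filter_eq_empty_iff.1 hP) hi ⟨hle, hhi⟩
    · exact (filter_eq_empty_iff.1 hP) hhi ⟨by rwa [hh], by rwa [hh]⟩
  rw [sum_invariant_powerset_eq_sum_powerset hh D fun S => (-1 : R) ^ #S,
    ← if_congr hP rfl rfl]
  simpa using congrArg (Int.cast : ℤ → R) (sum_powerset_neg_one_pow_card (x := P))

lemma sum_involutive_perm_filter_eq {R : Type*} [CommSemiring R] (B : α → α → R)
    (Y : Finset α) (p : α → Prop) [DecidablePred p] :
    ∑ σ ∈ univ.filter (fun σ : Equiv.Perm Y =>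
          (∀ x, σ (σ x) = x) ∧ ∀ i : Y, p i → ¬ p (σ i)),
        ∏ i ∈ univ.filter (fun i : Y => (i : α) ≤ σ i), B i (σ i) =
      ∑ f ∈ Y.involutionsOn,
        if ∀ i ∈ Y.filter p, f i ∉ Y.filter p then Y.pairingWeight B f else 0 := by
  rw [← filter_filter, sum_filter, involutionsOn, sum_map]
  refine sum_congr rfl fun σ _ => ?_
  refine if_congr ?_ (prod_perm_eq_pairingWeight B σ) rfl
  simp only [Embedding.coeFn_mk, mem_filter, not_and, and_imp]
  refine ⟨fun hσ i hiY hpi _ => ?_, fun hσ i hpi => ?_⟩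
  · simpa only [extendPerm_coe σ ⟨i, hiY⟩] using hσ ⟨i, hiY⟩ hpi
  · simpa only [extendPerm_coe] using hσ i i.2 hpi (by simp [extendPerm_coe])

end Weights

end Finset

lemma lhaf_eq_sum_pairingWeight (B : ℕ → ℕ → ℂ) (s : Finset ℕ) :
    lhaf B s = ∑ f ∈ s.involutionsOn, s.pairingWeight B f := by
  rw [lhaf, involutionsOn, sum_map]
  exact sum_congr rfl fun σ _ => prod_perm_eq_pairingWeight B σ

theorem stmt_6_general (B : ℕ → ℕ → ℂ)
    (Y : Finset ℕ) (C : Set ℕ) [DecidablePred (· ∈ C)] :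
    (∑ T ∈ (Y.filter (· ∈ C)).powerset, lhaf (fun i j => -B i j) T * lhaf B (Y \ T)) =
      ∑ σ ∈ Finset.univ.filter
          (fun σ : Equiv.Perm {x // x ∈ Y} =>
            (∀ x, σ (σ x) = x) ∧ ∀ i : {x // x ∈ Y}, (i : ℕ) ∈ C → ((σ i : ℕ)) ∉ C),
        ∏ i ∈ Finset.univ.filter (fun i : {x // x ∈ Y} => (i : ℕ) ≤ (σ i : ℕ)),
          B (i : ℕ) ((σ i : ℕ)) := by
  set D := Y.filter (· ∈ C)
  calc
    _ = ∑ T ∈ D.powerset, ∑ f ∈ T.involutionsOn, ∑ g ∈ (Y \ T).involutionsOn,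
          T.pairingWeight (fun i j => -B i j) f * (Y \ T).pairingWeight B g := by
      simp_rw [lhaf_eq_sum_pairingWeight, sum_mul_sum]
    _ = ∑ h ∈ Y.involutionsOn, ∑ T ∈ D.powerset with ∀ n ∈ T, h n ∈ T,
          (-1) ^ #{i ∈ T | i ≤ h i} * Y.pairingWeight B h := by
      rw [sum_powerset_sum_involutionsOn_sdiff (filter_subset _ _)]
      refine sum_congr rfl fun h _ => sum_congr rfl fun T hT => ?_
      have hTY : T ⊆ Y := (mem_powerset.1 (mem_filter.1 hT).1).trans (filter_subset _ _)
      rw [pairingWeight_piecewise_id, pairingWeight_piecewise_id, pairingWeight_neg, mul_assoc,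
        pairingWeight_mul_pairingWeight_sdiff B hTY]
    _ = ∑ h ∈ Y.involutionsOn, if ∀ i ∈ D, h i ∉ D then Y.pairingWeight B h else 0 := by
      refine sum_congr rfl fun h hh => ?_
      rw [← sum_mul, sum_invariant_powerset_neg_one_pow (mem_involutionsOn.1 hh).1, ite_mul,
        one_mul, zero_mul]
    _ = _ := (sum_involutive_perm_filter_eq B Y (· ∈ C)).symm

/-- inclusion–exclusion identity for the loop hafnian restricted to
involutions containing no matched pair (and no loop) lying entirely inside `C`. -/
theorem stmt_6 (B : ℕ → ℕ → ℂ) (hB : ∀ i j, B i j = B j i)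
    (Y : Finset ℕ) (C : Set ℕ) [DecidablePred (· ∈ C)] :
    (∑ T ∈ (Y.filter (· ∈ C)).powerset, lhaf (fun i j => -B i j) T * lhaf B (Y \ T)) =
      ∑ σ ∈ Finset.univ.filter
          (fun σ : Equiv.Perm {x // x ∈ Y} =>
            (∀ x, σ (σ x) = x) ∧ ∀ i : {x // x ∈ Y}, (i : ℕ) ∈ C → ((σ i : ℕ)) ∉ C),
        ∏ i ∈ Finset.univ.filter (fun i : {x // x ∈ Y} => (i : ℕ) ≤ (σ i : ℕ)),
          B (i : ℕ) ((σ i : ℕ)) :=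
  stmt_6_general B Y C
end

section
/- Let M ≥ 1, let U be an M×M complex unitary matrix, let E be an arbitrary M×M complex matrix, and set κ = max(1, ‖U − E‖₂). Then M − ‖(U − E)/κ‖_F² ≤ 2√M·(√M + 1)·‖E‖_F. -/
/-- Frobenius norm of a complex square matrix. -/
noncomputable def frobNorm {n : Type*} [Fintype n] (A : Matrix n n ℂ) : ℝ :=
  Real.sqrt (∑ i, ∑ j, ‖A i j‖ ^ 2)

/-- Operator norm of a complex square matrix induced by the Euclidean (ℓ²) norm. -/
noncomputable def l2OpNorm {n : Type*} [Fintype n] [DecidableEq n]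
    (A : Matrix n n ℂ) : ℝ :=
  ‖LinearMap.toContinuousLinearMap (Matrix.toEuclideanLin A)‖

/-!
Put `Ū = κ⁻¹ (U - E)`. Since `‖Ū‖₂ ≤ 1`, we get `‖Ū‖_F ≤ √M ‖Ū‖₂ ≤ √M = ‖U‖_F`, hence
`M - ‖Ū‖_F² = (‖U‖_F - ‖Ū‖_F)(‖U‖_F + ‖Ū‖_F) ≤ 2√M ‖U - Ū‖_F`. Finally
`U - Ū = (1 - κ⁻¹) U + κ⁻¹ E` and `1 - κ⁻¹ ≤ κ - 1 ≤ ‖E‖₂ ≤ ‖E‖_F`, so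
`‖U - Ū‖_F ≤ (√M + 1) ‖E‖_F`.
-/

open Matrix

variable {n : Type*} [Fintype n]

theorem sq_norm_sub_sq_norm_le {E : Type*} [SeminormedAddCommGroup E] {x y : E}
    (h : ‖y‖ ≤ ‖x‖) : ‖x‖ ^ 2 - ‖y‖ ^ 2 ≤ 2 * ‖x‖ * ‖x - y‖ :=
  calc ‖x‖ ^ 2 - ‖y‖ ^ 2 = (‖x‖ - ‖y‖) * (‖x‖ + ‖y‖) := by ring
    _ ≤ ‖x - y‖ * (2 * ‖x‖) := by
      gcongr
      · exact norm_sub_norm_le x y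
      · linarith
    _ = 2 * ‖x‖ * ‖x - y‖ := by ring

section Frobenius

attribute [local instance] Matrix.frobeniusNormedAddCommGroup Matrix.frobeniusNormedSpace

theorem frobNorm_eq_norm (A : Matrix n n ℂ) : frobNorm A = ‖A‖ := by
  simp [frobenius_norm_def, frobNorm, Real.sqrt_eq_rpow]

theorem l2OpNorm_le_frobNorm [DecidableEq n] (A : Matrix n n ℂ) : l2OpNorm A ≤ frobNorm A := by
  refine ContinuousLinearMap.opNorm_le_bound _ (Real.sqrt_nonneg _) fun x => ?_
  calc ‖WithLp.toLp 2 (A *ᵥ x.ofLp)‖ = ‖replicateCol Unit (A *ᵥ x.ofLp)‖ :=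
        (frobenius_norm_replicateCol _).symm
    _ = ‖A * replicateCol Unit x.ofLp‖ := by rw [replicateCol_mulVec]
    _ ≤ ‖A‖ * ‖replicateCol Unit x.ofLp‖ := frobenius_norm_mul _ _
    _ = frobNorm A * ‖x‖ := by rw [frobenius_norm_replicateCol, frobNorm_eq_norm]

theorem sq_frobNorm_sub_sq_frobNorm_le {A B : Matrix n n ℂ} (h : frobNorm B ≤ frobNorm A) :
    frobNorm A ^ 2 - frobNorm B ^ 2 ≤ 2 * frobNorm A * frobNorm (A - B) := by
  simp only [frobNorm_eq_norm] at h ⊢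
  exact sq_norm_sub_sq_norm_le h

theorem frobNorm_sub_inv_smul_sub_le (U E : Matrix n n ℂ) {κ : ℝ} (hκ : 1 ≤ κ)
    (hκE : κ ≤ 1 + frobNorm E) :
    frobNorm (U - (κ : ℂ)⁻¹ • (U - E)) ≤ (frobNorm U + 1) * frobNorm E := by
  have hκ0 : 0 < κ := zero_lt_one.trans_le hκ
  have hinv : ‖(κ : ℂ)⁻¹‖ = κ⁻¹ := by simp [abs_of_pos hκ0]
  have hsub : ‖1 - (κ : ℂ)⁻¹‖ ≤ frobNorm E := by
    rw [← Complex.ofReal_one, ← Complex.ofReal_inv, ← Complex.ofReal_sub, Complex.norm_real,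
      Real.norm_of_nonneg (sub_nonneg.mpr (inv_le_one_of_one_le₀ hκ))]
    -- `1 - κ⁻¹ = (κ - 1) / κ ≤ κ - 1`
    nlinarith [mul_inv_cancel₀ hκ0.ne', inv_le_one_of_one_le₀ hκ]
  simp only [frobNorm_eq_norm] at hsub ⊢
  calc ‖U - (κ : ℂ)⁻¹ • (U - E)‖ = ‖(1 - (κ : ℂ)⁻¹) • U + (κ : ℂ)⁻¹ • E‖ := by
        congr 1; module
    _ ≤ ‖1 - (κ : ℂ)⁻¹‖ * ‖U‖ + κ⁻¹ * ‖E‖ := by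
        grw [norm_add_le, norm_smul, norm_smul, hinv]
    _ ≤ ‖E‖ * ‖U‖ + 1 * ‖E‖ := by
        gcongr
        exact inv_le_one_of_one_le₀ hκ
    _ = (‖U‖ + 1) * ‖E‖ := by ring

end Frobenius

theorem l2OpNorm_nonneg [DecidableEq n] (A : Matrix n n ℂ) : 0 ≤ l2OpNorm A :=
  norm_nonneg _

theorem sum_sq_norm_col_le_sq_l2OpNorm [DecidableEq n] (A : Matrix n n ℂ) (j : n) :
    ∑ i, ‖A i j‖ ^ 2 ≤ l2OpNorm A ^ 2 := by
  have hcol : toEuclideanLin A (EuclideanSpace.single j 1) = WithLp.toLp 2 fun i => A i j := by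
    ext i
    simp [mulVec_single]
  have h : ‖WithLp.toLp 2 fun i => A i j‖ ≤ l2OpNorm A := by
    have h := (LinearMap.toContinuousLinearMap (toEuclideanLin A)).le_opNorm
      (EuclideanSpace.single j 1)
    rwa [LinearMap.coe_toContinuousLinearMap', hcol, PiLp.norm_single, norm_one, mul_one] at h
  calc ∑ i, ‖A i j‖ ^ 2 = ‖WithLp.toLp 2 fun i => A i j‖ ^ 2 := by rw [EuclideanSpace.norm_sq_eq]
    _ ≤ l2OpNorm A ^ 2 := by gcongr

theorem frobNorm_le_sqrt_card_mul_l2OpNorm [DecidableEq n] (A : Matrix n n ℂ) :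
    frobNorm A ≤ √(Fintype.card n) * l2OpNorm A :=
  calc frobNorm A = √(∑ j, ∑ i, ‖A i j‖ ^ 2) := by rw [frobNorm, Finset.sum_comm]
    _ ≤ √(∑ _j : n, l2OpNorm A ^ 2) :=
      Real.sqrt_le_sqrt (Finset.sum_le_sum fun j _ => sum_sq_norm_col_le_sq_l2OpNorm A j)
    _ = √(Fintype.card n) * l2OpNorm A := by
      rw [Finset.sum_const, Finset.card_univ, nsmul_eq_mul, Real.sqrt_mul (Nat.cast_nonneg _),
        Real.sqrt_sq (l2OpNorm_nonneg A)]

theorem sum_sq_norm_row_of_mem_unitaryGroup [DecidableEq n] {U : Matrix n n ℂ}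
    (hU : U ∈ unitaryGroup n ℂ) (i : n) : ∑ j, ‖U i j‖ ^ 2 = 1 := by
  have h := congrFun (congrFun (mem_unitaryGroup_iff.mp hU) i) i
  simp only [mul_apply, star_apply, RCLike.star_def, Complex.mul_conj, Complex.normSq_eq_norm_sq,
    one_apply_eq] at h
  exact_mod_cast h

theorem frobNorm_of_mem_unitaryGroup [DecidableEq n] {U : Matrix n n ℂ}
    (hU : U ∈ unitaryGroup n ℂ) : frobNorm U = √(Fintype.card n) := by
  simp [frobNorm, sum_sq_norm_row_of_mem_unitaryGroup hU]

section L2Operator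

open scoped Matrix.Norms.L2Operator

variable [DecidableEq n]

theorem l2OpNorm_eq_norm (A : Matrix n n ℂ) : l2OpNorm A = ‖A‖ := rfl

theorem l2OpNorm_le_one_of_mem_unitaryGroup {U : Matrix n n ℂ} (hU : U ∈ unitaryGroup n ℂ) :
    l2OpNorm U ≤ 1 := by
  have h : l2OpNorm U * l2OpNorm U ≤ 1 := by
    rw [l2OpNorm_eq_norm, ← l2_opNorm_conjTranspose_mul_self, ← star_eq_conjTranspose,
      mem_unitaryGroup_iff'.mp hU, ← diagonal_one, l2_opNorm_diagonal]
    exact pi_norm_le_iff_of_nonneg zero_le_one |>.mpr fun _ => by simp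
  nlinarith [l2OpNorm_nonneg U]

theorem max_one_l2OpNorm_sub_le {U : Matrix n n ℂ} (hU : U ∈ unitaryGroup n ℂ)
    (E : Matrix n n ℂ) : max 1 (l2OpNorm (U - E)) ≤ 1 + frobNorm E := by
  refine max_le (le_add_of_nonneg_right (Real.sqrt_nonneg _)) ?_
  calc l2OpNorm (U - E) ≤ l2OpNorm U + l2OpNorm E := norm_sub_le U E
    _ ≤ 1 + frobNorm E := add_le_add (l2OpNorm_le_one_of_mem_unitaryGroup hU)
      (l2OpNorm_le_frobNorm E)

theorem l2OpNorm_inv_max_one_smul_le_one (A : Matrix n n ℂ) :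
    l2OpNorm (((max 1 (l2OpNorm A) : ℝ) : ℂ)⁻¹ • A) ≤ 1 := by
  have hκ0 : 0 < max 1 (l2OpNorm A) := zero_lt_one.trans_le (le_max_left _ _)
  rw [l2OpNorm_eq_norm, norm_smul, norm_inv, Complex.norm_real, Real.norm_of_nonneg hκ0.le,
    inv_mul_le_one₀ hκ0]
  exact le_max_right _ _

end L2Operator

theorem stmt_11_general (M : ℕ) (U E : Matrix (Fin M) (Fin M) ℂ)
    (hU : U ∈ Matrix.unitaryGroup (Fin M) ℂ)
    (κ : ℝ) (hκ : κ = max 1 (l2OpNorm (U - E))) :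
    (M : ℝ) - frobNorm (((κ : ℂ))⁻¹ • (U - E)) ^ 2 ≤
      2 * Real.sqrt M * (Real.sqrt M + 1) * frobNorm E := by
  subst hκ
  set Ū := ((max 1 (l2OpNorm (U - E)) : ℝ) : ℂ)⁻¹ • (U - E)
  have hUF : frobNorm U = √M := by simpa using frobNorm_of_mem_unitaryGroup hU
  have hŪF : frobNorm Ū ≤ frobNorm U :=
    calc frobNorm Ū ≤ √M * l2OpNorm Ū := by simpa using frobNorm_le_sqrt_card_mul_l2OpNorm Ū
      _ ≤ √M * 1 := by grw [l2OpNorm_inv_max_one_smul_le_one]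
      _ = frobNorm U := by rw [mul_one, hUF]
  have hdiff : frobNorm (U - Ū) ≤ (√M + 1) * frobNorm E := hUF ▸
    frobNorm_sub_inv_smul_sub_le U E (le_max_left _ _) (max_one_l2OpNorm_sub_le hU E)
  calc (M : ℝ) - frobNorm Ū ^ 2 = frobNorm U ^ 2 - frobNorm Ū ^ 2 := by
        rw [hUF, Real.sq_sqrt (Nat.cast_nonneg M)]
    _ ≤ 2 * frobNorm U * frobNorm (U - Ū) := sq_frobNorm_sub_sq_frobNorm_le hŪF
    _ ≤ 2 * √M * ((√M + 1) * frobNorm E) := by rw [hUF]; gcongr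
    _ = 2 * √M * (√M + 1) * frobNorm E := by ring

/-- `M − ‖(U − E)/κ‖_F² ≤ 2√M(√M + 1)‖E‖_F` for
`κ = max(1, ‖U − E‖₂)`. -/
theorem stmt_11 (M : ℕ) (hM : 1 ≤ M) (U E : Matrix (Fin M) (Fin M) ℂ)
    (hU : U ∈ Matrix.unitaryGroup (Fin M) ℂ)
    (κ : ℝ) (hκ : κ = max 1 (l2OpNorm (U - E))) :
    (M : ℝ) - frobNorm (((κ : ℂ))⁻¹ • (U - E)) ^ 2 ≤
      2 * Real.sqrt M * (Real.sqrt M + 1) * frobNorm E :=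
  stmt_11_general M U E hU κ hκ
end

section
/- Let M ≥ 1, let O be a 2M×2M real orthogonal matrix, let r : Fin M → ℝ, let S_sq be the 2M×2M block-diagonal matrix whose i-th 2×2 diagonal block is diag(e^{r_i}, e^{−r_i}), and set S = O·S_sq and V₁ = (1/2)·S·Sᵀ. Let V₂ be a 2M×2M real symmetric positive semidefinite matrix with trace(S⁻¹·V₂·S⁻ᵀ) ≥ M, and set X = V₁ − V₂. If ‖X‖_F·√(2·Σ_i cosh(4·r_i)) < 2, then 1 − (det(V₁ + V₂))^{−1/2} ≤ (1/2)·‖X‖_F·√(2·Σ_i cosh(4·r_i)). -/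
/-!
Conjugating by `S⁻¹` turns `V₁ + V₂ = SSᵀ - X` into `A = 1 - S⁻¹ X S⁻ᵀ`, which is positive
definite and has the same determinant because `det S = ±1`. Applying `λ ≤ exp (λ - 1)` to the
eigenvalues gives `det A ≤ exp (tr A - 2M) = exp (-tr ((SSᵀ)⁻¹ X))`, and Cauchy–Schwarz bounds the
exponent by `‖(SSᵀ)⁻¹‖_F ‖X‖_F`, where `‖(SSᵀ)⁻¹‖_F² = Σᵢ (e^{4rᵢ} + e^{-4rᵢ})`. Finally
`1 - det^{-1/2} ≤ (log det) / 2`.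
-/

open Matrix

/-- Frobenius norm of a real square matrix. -/
noncomputable def frobNormR {n : Type*} [Fintype n] (A : Matrix n n ℝ) : ℝ :=
  Real.sqrt (∑ i, ∑ j, (A i j) ^ 2)

namespace Matrix

variable {n : Type*} [Fintype n]

theorem sum_sq_entries_eq_trace_mul_transpose (A : Matrix n n ℝ) :
    ∑ i, ∑ j, A i j ^ 2 = (A * Aᵀ).trace := by
  simp [trace, mul_apply, sq]

theorem abs_trace_mul_le_frobNormR_mul (A B : Matrix n n ℝ) :
    |(A * B).trace| ≤ frobNormR A * frobNormR B := by
  have hcs := Real.sum_mul_le_sqrt_mul_sqrt (Finset.univ : Finset (n × n))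
    (fun p => |A p.1 p.2|) (fun p => |B p.2 p.1|)
  simp only [sq_abs, ← Finset.univ_product_univ, Finset.sum_product] at hcs
  rw [Finset.sum_comm (f := fun i j => B j i ^ 2)] at hcs
  calc |(A * B).trace| ≤ ∑ i, ∑ j, |A i j| * |B j i| := by
        simp only [trace, diag, mul_apply, ← abs_mul]
        exact (Finset.abs_sum_le_sum_abs _ _).trans (Finset.sum_le_sum fun i _ =>
          Finset.abs_sum_le_sum_abs _ _)
    _ ≤ frobNormR A * frobNormR B := hcs

variable [DecidableEq n]

theorem frobNormR_diagonal (e : n → ℝ) :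
    frobNormR (diagonal e) = Real.sqrt (∑ i, e i ^ 2) := by
  simp [frobNormR, diagonal_apply, ite_pow]

theorem frobNormR_orthogonal_conj {O : Matrix n n ℝ} (hO : O ∈ orthogonalGroup n ℝ)
    (A : Matrix n n ℝ) : frobNormR (O * A * Oᵀ) = frobNormR A := by
  have hOO : Oᵀ * O = 1 := (mem_orthogonalGroup_iff' n ℝ).mp hO
  have hconj : O * A * Oᵀ * (O * A * Oᵀ)ᵀ = O * (A * Aᵀ) * Oᵀ := by
    simp only [transpose_mul, transpose_transpose, Matrix.mul_assoc]
    rw [← Matrix.mul_assoc Oᵀ O, hOO, Matrix.one_mul]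
  rw [frobNormR, frobNormR, sum_sq_entries_eq_trace_mul_transpose,
    sum_sq_entries_eq_trace_mul_transpose, hconj, trace_mul_cycle, hOO, Matrix.one_mul]

theorem PosSemidef.det_le_exp_trace_sub_card {A : Matrix n n ℝ} (hA : A.PosSemidef) :
    A.det ≤ Real.exp (A.trace - Fintype.card n) := by
  rw [hA.isHermitian.det_eq_prod_eigenvalues, hA.isHermitian.trace_eq_sum_eigenvalues,
    ← Finset.card_univ, ← nsmul_one, ← Finset.sum_const, ← Finset.sum_sub_distrib,
    Real.exp_sum]
  refine Finset.prod_le_prod (fun i _ => by simpa using hA.eigenvalues_nonneg i) fun i _ => ?_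
  simpa using Real.add_one_le_exp (hA.isHermitian.eigenvalues i - 1)

theorem det_sq_of_mem_orthogonalGroup {O : Matrix n n ℝ} (hO : O ∈ orthogonalGroup n ℝ) :
    O.det ^ 2 = 1 := by
  simpa [sq, det_mul, det_transpose] using congrArg det ((mem_orthogonalGroup_iff n ℝ).mp hO)

theorem inv_diagonal_of_ne_zero {d : n → ℝ} (hd : ∀ i, d i ≠ 0) :
    (diagonal d)⁻¹ = diagonal d⁻¹ :=
  inv_eq_left_inv <| by
    rw [diagonal_mul_diagonal, ← diagonal_one]
    exact congrArg diagonal (funext fun i => inv_mul_cancel₀ (hd i))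

theorem inv_orthogonal_mul_diagonal_mul_transpose {O : Matrix n n ℝ}
    (hO : O ∈ orthogonalGroup n ℝ) {d : n → ℝ} (hd : ∀ i, d i ≠ 0) :
    (O * diagonal d * (O * diagonal d)ᵀ)⁻¹ = O * diagonal (fun i => (d i)⁻¹ ^ 2) * Oᵀ := by
  have hOinv : O⁻¹ = Oᵀ := inv_eq_left_inv ((mem_orthogonalGroup_iff' n ℝ).mp hO)
  rw [transpose_mul, diagonal_transpose, mul_inv_rev, mul_inv_rev, mul_inv_rev, hOinv,
    ← transpose_nonsing_inv, hOinv, transpose_transpose, inv_diagonal_of_ne_zero hd,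
    ← Matrix.mul_assoc, Matrix.mul_assoc O, diagonal_mul_diagonal]
  simp only [Pi.inv_apply, sq]

theorem posDef_half_smul_mul_transpose_add {S V : Matrix n n ℝ} (hS : IsUnit S.det)
    (hV : V.PosSemidef) : ((1 / 2 : ℝ) • (S * Sᵀ) + V).PosDef := by
  refine PosDef.add_posSemidef ?_ hV
  have h := (IsUnit.posDef_star_right_conjugate_iff ((isUnit_iff_isUnit_det S).mpr hS)
    (x := (1 / 2 : ℝ) • 1)).mpr
    (PosDef.one.smul (by norm_num))
  simpa [star_eq_conjTranspose] using h

theorem det_half_smul_mul_transpose_add_le {S V : Matrix n n ℝ} (hS : IsUnit S.det)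
    (hV : V.PosSemidef) :
    ((1 / 2 : ℝ) • (S * Sᵀ) + V).det ≤
      S.det ^ 2 * Real.exp (frobNormR (S * Sᵀ)⁻¹ * frobNormR ((1 / 2 : ℝ) • (S * Sᵀ) - V)) := by
  set X := (1 / 2 : ℝ) • (S * Sᵀ) - V
  have hTS : S⁻¹ * S = 1 := nonsing_inv_mul S hS
  have hdetTS : S⁻¹.det * S.det = 1 := by rw [← det_mul, hTS, det_one]
  set A := S⁻¹ * ((1 / 2 : ℝ) • (S * Sᵀ) + V) * S⁻¹ᵀ with hA_def
  have hA : A.PosSemidef := by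
    have h := (posDef_half_smul_mul_transpose_add hS hV).posSemidef.mul_mul_conjTranspose_same S⁻¹
    rwa [conjTranspose_eq_transpose_of_trivial] at h
  have hdet : ((1 / 2 : ℝ) • (S * Sᵀ) + V).det = S.det ^ 2 * A.det := by
    rw [det_mul, det_mul, det_transpose]
    linear_combination -((1 / 2 : ℝ) • (S * Sᵀ) + V).det * (1 + S⁻¹.det * S.det) * hdetTS
  have htrace : A.trace - Fintype.card n = -((S * Sᵀ)⁻¹ * X).trace := by
    have hA_eq : A = 1 - S⁻¹ * X * S⁻¹ᵀ := by
      have hsum : (1 / 2 : ℝ) • (S * Sᵀ) + V = S * Sᵀ - X := by module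
      rw [hA_def, hsum, Matrix.mul_sub, Matrix.sub_mul, ← Matrix.mul_assoc, hTS, Matrix.one_mul,
        ← transpose_mul, hTS, transpose_one]
    rw [hA_eq, trace_sub, trace_one, trace_mul_cycle, mul_inv_rev, transpose_nonsing_inv]
    ring
  calc ((1 / 2 : ℝ) • (S * Sᵀ) + V).det = S.det ^ 2 * A.det := hdet
    _ ≤ S.det ^ 2 * Real.exp (-((S * Sᵀ)⁻¹ * X).trace) := by
      rw [← htrace]
      exact mul_le_mul_of_nonneg_left hA.det_le_exp_trace_sub_card (sq_nonneg _)
    _ ≤ S.det ^ 2 * Real.exp (frobNormR (S * Sᵀ)⁻¹ * frobNormR X) := by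
      gcongr
      exact (neg_le_abs _).trans (abs_trace_mul_le_frobNormR_mul _ _)

end Matrix

theorem Real.one_sub_rpow_neg_half_le {x c : ℝ} (hx : 0 < x) (h : x ≤ Real.exp c) :
    1 - x ^ (-(1 / 2) : ℝ) ≤ c / 2 := by
  have hlog : Real.log x ≤ c := (Real.log_le_iff_le_exp hx).mpr h
  rw [Real.rpow_def_of_pos hx]
  linarith [Real.add_one_le_exp (Real.log x * (-(1 / 2)))]

noncomputable def squeezingSpectrum {ι : Type*} (r : ι → ℝ) : ι × Fin 2 → ℝ :=
  fun p => if p.2 = 0 then Real.exp (r p.1) else Real.exp (-r p.1)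

section squeezingSpectrum

variable {ι : Type*} (r : ι → ℝ)

theorem squeezingSpectrum_ne_zero (p : ι × Fin 2) : squeezingSpectrum r p ≠ 0 := by
  unfold squeezingSpectrum
  split_ifs <;> positivity

variable [Fintype ι]

theorem prod_squeezingSpectrum : ∏ p, squeezingSpectrum r p = 1 := by
  simp [squeezingSpectrum, Fintype.prod_prod_type, ← Real.exp_add]

theorem sum_squeezingSpectrum_inv_pow_four :
    ∑ p, (squeezingSpectrum r p)⁻¹ ^ 4 = 2 * ∑ i, Real.cosh (4 * r i) := by
  simp only [squeezingSpectrum, Fintype.sum_prod_type, Fin.sum_univ_two, Finset.mul_sum]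
  refine Finset.sum_congr rfl fun i _ => ?_
  simp only [Fin.isValue, ↓reduceIte, one_ne_zero, ← Real.exp_neg, ← Real.exp_nat_mul,
    Real.cosh_eq]
  ring_nf

end squeezingSpectrum

theorem stmt_16_general (M : ℕ)
    (O : Matrix (Fin M × Fin 2) (Fin M × Fin 2) ℝ)
    (hO : O ∈ Matrix.orthogonalGroup (Fin M × Fin 2) ℝ)
    (r : Fin M → ℝ)
    (Ssq : Matrix (Fin M × Fin 2) (Fin M × Fin 2) ℝ)
    (hSsq : Ssq = Matrix.diagonal fun p =>
      if p.2 = 0 then Real.exp (r p.1) else Real.exp (-r p.1))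
    (S : Matrix (Fin M × Fin 2) (Fin M × Fin 2) ℝ) (hS : S = O * Ssq)
    (V₁ : Matrix (Fin M × Fin 2) (Fin M × Fin 2) ℝ) (hV₁ : V₁ = (1/2 : ℝ) • (S * Sᵀ))
    (V₂ : Matrix (Fin M × Fin 2) (Fin M × Fin 2) ℝ) (hV₂ : V₂.PosSemidef)
    (X : Matrix (Fin M × Fin 2) (Fin M × Fin 2) ℝ) (hX : X = V₁ - V₂) :
    1 - (V₁ + V₂).det ^ (-(1/2) : ℝ) ≤
      (1/2) * frobNormR X * Real.sqrt (2 * ∑ i, Real.cosh (4 * r i)) := by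
  replace hS : S = O * diagonal (squeezingSpectrum r) := hSsq ▸ hS
  have hdetS : S.det ^ 2 = 1 := by
    rw [hS, det_mul, det_diagonal, prod_squeezingSpectrum, mul_one,
      det_sq_of_mem_orthogonalGroup hO]
  have hnorm : frobNormR (S * Sᵀ)⁻¹ = Real.sqrt (2 * ∑ i, Real.cosh (4 * r i)) := by
    rw [hS, inv_orthogonal_mul_diagonal_mul_transpose hO (squeezingSpectrum_ne_zero r),
      frobNormR_orthogonal_conj hO, frobNormR_diagonal, ← sum_squeezingSpectrum_inv_pow_four]
    simp only [← pow_mul]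
  have hunit : IsUnit S.det := (isUnit_pow_iff two_ne_zero).mp (hdetS ▸ isUnit_one)
  have hpos := (posDef_half_smul_mul_transpose_add hunit hV₂).det_pos
  have hle := det_half_smul_mul_transpose_add_le hunit hV₂
  rw [hdetS, one_mul, hnorm] at hle
  subst hV₁ hX
  linarith [Real.one_sub_rpow_neg_half_le hpos hle]

/-- infidelity bound for Gaussian states produced by beam splitter
arrays acting on squeezed vacua: `1 − det(V₁+V₂)^{−1/2} ≤ ‖X‖_F √(2 Σᵢ cosh 4rᵢ)/2`. -/
theorem stmt_16 (M : ℕ) (hM : 1 ≤ M)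
    (O : Matrix (Fin M × Fin 2) (Fin M × Fin 2) ℝ)
    (hO : O ∈ Matrix.orthogonalGroup (Fin M × Fin 2) ℝ)
    (r : Fin M → ℝ)
    (Ssq : Matrix (Fin M × Fin 2) (Fin M × Fin 2) ℝ)
    (hSsq : Ssq = Matrix.diagonal fun p =>
      if p.2 = 0 then Real.exp (r p.1) else Real.exp (-r p.1))
    (S : Matrix (Fin M × Fin 2) (Fin M × Fin 2) ℝ) (hS : S = O * Ssq)
    (V₁ : Matrix (Fin M × Fin 2) (Fin M × Fin 2) ℝ) (hV₁ : V₁ = (1/2 : ℝ) • (S * Sᵀ))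
    (V₂ : Matrix (Fin M × Fin 2) (Fin M × Fin 2) ℝ) (hV₂ : V₂.PosSemidef)
    (htr : (M : ℝ) ≤ Matrix.trace (S⁻¹ * V₂ * (S⁻¹)ᵀ))
    (X : Matrix (Fin M × Fin 2) (Fin M × Fin 2) ℝ) (hX : X = V₁ - V₂)
    (hsmall : frobNormR X * Real.sqrt (2 * ∑ i, Real.cosh (4 * r i)) < 2) :
    1 - (V₁ + V₂).det ^ (-(1/2) : ℝ) ≤
      (1/2) * frobNormR X * Real.sqrt (2 * ∑ i, Real.cosh (4 * r i)) :=
  stmt_16_general M O hO r Ssq hSsq S hS V₁ hV₁ V₂ hV₂ X hX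
end
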